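/- arXiv:2107.09355 — 10 statements merged into one kernel-verified Lean document; each statement's English description precedes it below -/
import Mathlib

section
/- Let H : ℓ²(ℤ, ℝ^d) → ℝ be a continuous linear functional family {H_t : t ∈ ℤ} that is causal (H_t(x₁) = H_t(x₂) whenever x₁(s) = x₂(s) for all s ≤ t) and time-homogeneous (H_t(x) = H_{t+τ}(x(·−τ)) for all t, τ). Then there exists a unique ℓ² sequence ρ : ℕ → ℝ^d such that H_t(x) = Σ_{s=0}^∞ ρ(s)ᵀ x(t−s) for all t ∈ ℤ and all x ∈ ℓ²(ℤ, ℝ^d). -/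
open scoped InnerProductSpace

theorem stmt1 (d : ℕ)
    (H : ℤ → (lp (fun _ : ℤ => EuclideanSpace ℝ (Fin d)) 2 →L[ℝ] ℝ))
    (hcausal : ∀ t : ℤ, ∀ x₁ x₂, (∀ s : ℤ, s ≤ t → x₁ s = x₂ s) → H t x₁ = H t x₂)
    (hhomog : ∀ t τ : ℤ, ∀ x y, (∀ s : ℤ, y s = x (s - τ)) → H t x = H (t + τ) y) :
    ∃! ρ : ℕ → EuclideanSpace ℝ (Fin d),
      Memℓp ρ 2 ∧
      ∀ (t : ℤ) x, H t x = ∑' s : ℕ, (inner ℝ (ρ s) (x (t - (s : ℤ))) : ℝ) := by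
  classical
  set X := lp (fun _ : ℤ => EuclideanSpace ℝ (Fin d)) 2 with hX
  -- Riesz representation
  let y : ℤ → X := fun t => (InnerProductSpace.toDual ℝ X).symm (H t)
  have hy : ∀ t (x : X), H t x = ⟪y t, x⟫_ℝ := fun t x =>
    (InnerProductSpace.toDual_symm_apply).symm
  -- single vectors
  have hsingle : ∀ (t s : ℤ) (v : EuclideanSpace ℝ (Fin d)),
      H t (lp.single 2 s v) = ⟪(y t : ∀ _ : ℤ, EuclideanSpace ℝ (Fin d)) s, v⟫_ℝ := by
    intro t s v
    rw [hy, lp.inner_single_right]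
  -- causality: y t s = 0 for s > t
  have hzero : ∀ t s : ℤ, t < s → (y t : ∀ _ : ℤ, EuclideanSpace ℝ (Fin d)) s = 0 := by
    intro t s hts
    apply ext_inner_right ℝ
    intro v
    have := hsingle t s v
    have h0 : H t (lp.single 2 s v) = H t 0 := by
      apply hcausal
      intro u hu
      have : u ≠ s := by omega
      simp [lp.single_apply, this]
    rw [h0] at this
    simp only [map_zero] at this
    simp [← this]
  -- homogeneity: y (t+τ) s = y t (s-τ)
  have hshift : ∀ t τ s : ℤ, (y (t + τ) : ∀ _ : ℤ, EuclideanSpace ℝ (Fin d)) s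
      = (y t : ∀ _ : ℤ, EuclideanSpace ℝ (Fin d)) (s - τ) := by
    intro t τ s
    apply ext_inner_right ℝ
    intro v
    rw [← hsingle, ← hsingle]
    refine (hhomog t τ (lp.single 2 (s - τ) v) (lp.single 2 s v) ?_).symm
    intro u
    by_cases hu : u = s
    · subst hu; simp [lp.single_apply]
    · have : u - τ ≠ s - τ := by omega
      simp [lp.single_apply, hu, this]
  have hyts : ∀ t : ℤ, ∀ n : ℕ, (y t : ∀ _ : ℤ, EuclideanSpace ℝ (Fin d)) (t - (n : ℤ))
      = (y 0 : ∀ _ : ℤ, EuclideanSpace ℝ (Fin d)) (-(n : ℤ)) := by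
    intro t n
    have := hshift 0 t (t - n)
    rw [zero_add] at this
    rw [this, show t - (n : ℤ) - t = -(n : ℤ) by ring]
  refine ⟨fun n => (y 0 : ∀ _ : ℤ, EuclideanSpace ℝ (Fin d)) (-(n : ℤ)), ⟨?_, ?_⟩, ?_⟩
  · -- Memℓp
    have hy2 := lp.memℓp (y 0)
    have hp : 0 < ENNReal.toReal 2 := by norm_num
    rw [memℓp_gen_iff hp] at hy2 ⊢
    refine hy2.comp_injective (fun a b hab => ?_)
    simp only [neg_inj, Nat.cast_inj] at hab
    exact hab
  · -- representation
    intro t x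
    rw [hy, lp.inner_eq_tsum]
    refine (Function.Injective.tsum_eq (g := fun n : ℕ => t - (n : ℤ))
      (fun a b hab => by simp only [sub_right_inj, Nat.cast_inj] at hab; exact hab)
      ?_).symm.trans ?_
    · intro s hs
      simp only [Function.mem_support, ne_eq] at hs
      by_contra hr
      have hts : t < s := by
        rcases lt_or_ge t s with h | h
        · exact h
        · refine absurd ⟨(t - s).toNat, ?_⟩ hr
          show t - ((t - s).toNat : ℤ) = s
          omega
      exact hs (by rw [hzero t s hts]; simp)
    · exact tsum_congr fun n => by rw [hyts t n]
  · -- uniqueness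
    intro ρ ⟨hρ, hrep⟩
    funext n
    apply ext_inner_right ℝ
    intro v
    have h1 := hrep 0 (lp.single 2 (-(n : ℤ)) v)
    have h2 : H 0 (lp.single 2 (-(n : ℤ)) v)
        = ⟪(y 0 : ∀ _ : ℤ, EuclideanSpace ℝ (Fin d)) (-(n : ℤ)), v⟫_ℝ := hsingle 0 _ v
    rw [h2] at h1
    rw [h1]
    refine ((tsum_eq_single n ?_).trans ?_).symm
    · intro m hmn
      have : (0 : ℤ) - m ≠ -(n : ℤ) := by omega
      simp [lp.single_apply, this, hmn]
    · have : (0 : ℤ) - n = -(n : ℤ) := by ring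
      simp [lp.single_apply, this]
end

section
/- For vectors w₁, ..., w_K ∈ ℝ^l (each viewed as a sequence supported on {0,...,l−1}), the iterated dilated convolution w_K ⋆_{l^{K−1}} w_{K−1} ⋆_{l^{K−2}} ⋯ ⋆_l w₁ is a sequence supported on {0,...,l^K − 1} whose value at t = Σ_{i=0}^{K−1} s_{i+1} l^i (the base-l expansion with digits s_K,...,s₁, 0 ≤ s_k ≤ l−1) equals w_K(s_K)·w_{K−1}(s_{K−1})·⋯·w₁(s₁). -/
/-- Discrete dilated convolution with dilation rate `d`. -/
noncomputable def dconv (f g : ℤ → ℝ) (d : ℤ) : ℤ → ℝ :=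
  fun t => ∑' s : ℤ, f s * g (t - d * s)

/-- Iterated dilated convolution of filters `w 0, w 1, …` with base `l`:
`iterConv l w k = w k ⋆_{l^k} (w (k-1) ⋆_{l^{k-1}} ( ⋯ ⋆_l w 0))`. -/
noncomputable def iterConv (l : ℕ) (w : ℕ → ℤ → ℝ) : ℕ → ℤ → ℝ
  | 0 => w 0
  | k + 1 => dconv (w (k + 1)) (iterConv l w k) ((l : ℤ) ^ (k + 1))

lemma digit_sum_bounds (l : ℕ) (hl : 1 ≤ l) (n : ℕ) (s : ℕ → ℤ)
    (hs : ∀ i < n, 0 ≤ s i ∧ s i < (l : ℤ)) :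
    0 ≤ ∑ i ∈ Finset.range n, s i * (l : ℤ) ^ i ∧
      ∑ i ∈ Finset.range n, s i * (l : ℤ) ^ i < (l : ℤ) ^ n := by
  induction n with
  | zero => simp
  | succ n ih =>
    have hln : (0:ℤ) < (l:ℤ) ^ n := by positivity
    obtain ⟨h1, h2⟩ := ih (fun i hi => hs i (Nat.lt_succ_of_lt hi))
    obtain ⟨h3, h4⟩ := hs n (Nat.lt_succ_self n)
    rw [Finset.sum_range_succ]
    constructor
    · nlinarith
    · rw [pow_succ]
      nlinarith

lemma iterConv_main (l : ℕ) (hl : 1 ≤ l) (w : ℕ → ℤ → ℝ) (k : ℕ)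
    (hw : ∀ j ≤ k, ∀ s : ℤ, (s < 0 ∨ (l : ℤ) ≤ s) → w j s = 0) :
    (∀ t : ℤ, (t < 0 ∨ (l : ℤ) ^ (k + 1) ≤ t) → iterConv l w k t = 0) ∧
    (∀ s : ℕ → ℤ, (∀ i ≤ k, 0 ≤ s i ∧ s i < (l : ℤ)) →
      iterConv l w k (∑ i ∈ Finset.range (k + 1), s i * (l : ℤ) ^ i) =
        ∏ i ∈ Finset.range (k + 1), w i (s i)) := by
  induction k with
  | zero =>
    constructor
    · intro t ht
      simpa [iterConv] using hw 0 le_rfl t (by simpa using ht)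
    · intro s hs
      simp [iterConv]
  | succ k ih =>
    have hwk : ∀ j ≤ k, ∀ s : ℤ, (s < 0 ∨ (l : ℤ) ≤ s) → w j s = 0 :=
      fun j hj => hw j (Nat.le_succ_of_le hj)
    obtain ⟨IH1, IH2⟩ := ih hwk
    have hlp : (0:ℤ) < (l:ℤ) ^ (k + 1) := by positivity
    have hl1 : (1:ℤ) ≤ (l:ℤ) := by exact_mod_cast hl
    constructor
    · intro t ht
      show (∑' s : ℤ, w (k+1) s * iterConv l w k (t - (l:ℤ)^(k+1) * s)) = 0
      have hz : ∀ s : ℤ, w (k+1) s * iterConv l w k (t - (l:ℤ)^(k+1) * s) = 0 := by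
        intro s
        by_cases hs : s < 0 ∨ (l:ℤ) ≤ s
        · rw [hw (k+1) le_rfl s hs, zero_mul]
        · push_neg at hs
          obtain ⟨hs0, hsl⟩ := hs
          have hsl' : s ≤ (l:ℤ) - 1 := by omega
          rw [IH1 (t - (l:ℤ)^(k+1) * s) ?_, mul_zero]
          rcases ht with ht | ht
          · left; nlinarith
          · right
            rw [pow_succ] at ht
            nlinarith
      rw [tsum_congr hz, tsum_zero]
    · intro s hs
      have hsk : ∀ i ≤ k, 0 ≤ s i ∧ s i < (l:ℤ) := fun i hi => hs i (Nat.le_succ_of_le hi)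
      obtain ⟨ht0, ht1⟩ := digit_sum_bounds l hl (k+1) s (fun i hi => hs i (by omega))
      set t' : ℤ := ∑ i ∈ Finset.range (k+1), s i * (l:ℤ)^i with ht'
      have hsum : (∑ i ∈ Finset.range (k+2), s i * (l:ℤ)^i) = t' + s (k+1) * (l:ℤ)^(k+1) := by
        rw [Finset.sum_range_succ]
      show (∑' b : ℤ, w (k+1) b * iterConv l w k
          ((∑ i ∈ Finset.range (k+2), s i * (l:ℤ)^i) - (l:ℤ)^(k+1) * b)) = _
      rw [hsum]
      have hmain : (∑' b : ℤ, w (k+1) b * iterConv l w k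
          (t' + s (k+1) * (l:ℤ)^(k+1) - (l:ℤ)^(k+1) * b))
          = w (k+1) (s (k+1)) * iterConv l w k t' := by
        rw [tsum_eq_single (s (k+1)) ?_]
        · ring_nf
        · intro b hb
          by_cases hbl : b < 0 ∨ (l:ℤ) ≤ b
          · rw [hw (k+1) le_rfl b hbl, zero_mul]
          · push_neg at hbl
            rw [IH1 (t' + s (k+1) * (l:ℤ)^(k+1) - (l:ℤ)^(k+1) * b) ?_, mul_zero]
            rcases lt_or_gt_of_ne hb with hlt | hgt
            · right
              have : s (k+1) - b ≥ 1 := by omega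
              nlinarith
            · left
              have : b - s (k+1) ≥ 1 := by omega
              nlinarith
      rw [hmain, IH2 s hsk, Finset.prod_range_succ _ (k+1), mul_comm]
  
theorem stmt3 (l K : ℕ) (hl : 1 ≤ l) (hK : 1 ≤ K) (w : ℕ → ℤ → ℝ)
    (hw : ∀ k < K, ∀ s : ℤ, (s < 0 ∨ (l : ℤ) ≤ s) → w k s = 0) :
    (∀ t : ℤ, (t < 0 ∨ (l : ℤ) ^ K ≤ t) → iterConv l w (K - 1) t = 0) ∧
    (∀ s : ℕ → ℤ, (∀ i < K, 0 ≤ s i ∧ s i < (l : ℤ)) →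
      iterConv l w (K - 1) (∑ i ∈ Finset.range K, s i * (l : ℤ) ^ i) =
        ∏ i ∈ Finset.range K, w i (s i)) := by
  obtain ⟨k, rfl⟩ : ∃ k, K = k + 1 := ⟨K - 1, by omega⟩
  have h := iterConv_main l hl w k (fun j hj => hw j (by omega))
  simpa using
    ⟨h.1, fun s hs => h.2 s (fun i hi => hs i (by omega))⟩
end

section
/- Let l, K ≥ 1 and let w₁,...,w_K ∈ ℝ^l be filters such that each wₖ has all entries zero except wₖ(sₖ) = 1 for some 0 ≤ sₖ ≤ l−1. Then the iterated dilated convolution (w_K ⋆_{l^{K−1}} ⋯ ⋆_l w₁)(t) equals 1 if t = Σ_{i=0}^{K−1} s_{i+1}·l^i and 0 otherwise. -/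
lemma iterConv_aux (l : ℕ) (w : ℕ → ℤ → ℝ) (s : ℕ → ℤ) (k : ℕ)
    (hw : ∀ i ≤ k, w i (s i) = 1 ∧ ∀ j : ℤ, j ≠ s i → w i j = 0) :
    ∀ t : ℤ, iterConv l w k t =
      if t = ∑ i ∈ Finset.range (k + 1), s i * (l : ℤ) ^ i then 1 else 0 := by
  induction k with
  | zero =>
    intro t
    simp only [iterConv, Finset.sum_range_one, pow_zero, mul_one]
    obtain ⟨h1, h0⟩ := hw 0 le_rfl
    by_cases h : t = s 0
    · simp [h, h1]
    · simp [h, h0 t h]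
  | succ k ih =>
    intro t
    have hw' : ∀ i ≤ k, w i (s i) = 1 ∧ ∀ j : ℤ, j ≠ s i → w i j = 0 :=
      fun i hi => hw i (hi.trans (Nat.le_succ k))
    obtain ⟨h1, h0⟩ := hw (k + 1) le_rfl
    have key : iterConv l w (k + 1) t
        = w (k + 1) (s (k + 1)) * iterConv l w k (t - (l : ℤ) ^ (k + 1) * s (k + 1)) := by
      simp only [iterConv, dconv]
      exact tsum_eq_single (s (k + 1)) (fun b hb => by rw [h0 b hb, zero_mul])
    rw [key, h1, one_mul, ih hw']
    have hsum : ∑ i ∈ Finset.range (k + 2), s i * (l : ℤ) ^ i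
        = (∑ i ∈ Finset.range (k + 1), s i * (l : ℤ) ^ i) + s (k + 1) * (l : ℤ) ^ (k + 1) :=
      Finset.sum_range_succ _ _
    rw [hsum]
    simp only [sub_eq_iff_eq_add, mul_comm ((l : ℤ) ^ (k + 1)) (s (k + 1))]

theorem stmt4 (l K : ℕ) (hl : 1 ≤ l) (hK : 1 ≤ K) (w : ℕ → ℤ → ℝ) (s : ℕ → ℤ)
    (hs : ∀ k < K, 0 ≤ s k ∧ s k < (l : ℤ))
    (hw : ∀ k < K, w k (s k) = 1 ∧ ∀ j : ℤ, j ≠ s k → w k j = 0) :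
    ∀ t : ℤ, iterConv l w (K - 1) t =
      if t = ∑ i ∈ Finset.range K, s i * (l : ℤ) ^ i then 1 else 0 := by
  obtain ⟨k, rfl⟩ : ∃ k, K = k + 1 := ⟨K - 1, (Nat.succ_pred_eq_of_pos hK).symm⟩
  simpa using iterConv_aux l w s k (fun i hi => hw i (Nat.lt_succ_of_le hi))
end

section
/- The tensorisation of an iterated dilated convolution equals the outer product of the filters: for w₁,...,w_K ∈ ℝ^l, T_{l^K}(w_K ⋆_{l^{K−1}} w_{K−1} ⋆ ⋯ ⋆_l w₁) = w_K ⊗ w_{K−1} ⊗ ⋯ ⊗ w₁, i.e., the entry with multi-index (s_K, s_{K−1}, ..., s₁) of the tensorised convolution equals ∏_{k=1}^K wₖ(sₖ). -/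
/-- Tensorisation of a sequence supported on `[0, l^K − 1]` into an order-`K`
tensor indexed by base-`l` digits. -/
noncomputable def tens (l K : ℕ) (ρ : ℤ → ℝ) : (Fin K → Fin l) → ℝ :=
  fun idx => ρ (∑ i : Fin K, ((idx i : ℕ) : ℤ) * (l : ℤ) ^ (i : ℕ))

lemma digit_sum_nonneg (l k : ℕ) (s : Fin (k+1) → Fin l) :
    0 ≤ ∑ i : Fin (k+1), ((s i : ℕ) : ℤ) * (l : ℤ) ^ (i : ℕ) :=
  Finset.sum_nonneg fun i _ => mul_nonneg (Int.ofNat_nonneg _) (pow_nonneg (Int.ofNat_nonneg _) _)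

lemma digit_sum_lt (l k : ℕ) (hl : 1 ≤ l) (s : Fin (k+1) → Fin l) :
    ∑ i : Fin (k+1), ((s i : ℕ) : ℤ) * (l : ℤ) ^ (i : ℕ) < (l : ℤ) ^ (k+1) := by
  have h1 : ∑ i : Fin (k+1), ((s i : ℕ) : ℤ) * (l : ℤ) ^ (i : ℕ)
      ≤ ∑ i : Fin (k+1), ((l : ℤ) - 1) * (l : ℤ) ^ (i : ℕ) := by
    apply Finset.sum_le_sum
    intro i _
    apply mul_le_mul_of_nonneg_right _ (pow_nonneg (by positivity) _)
    have := (s i).2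
    omega
  have h2 : ∑ i : Fin (k+1), ((l : ℤ) - 1) * (l : ℤ) ^ (i : ℕ)
      = (l : ℤ) ^ (k+1) - 1 := by
    rw [Fin.sum_univ_eq_sum_range (fun i => ((l : ℤ) - 1) * (l : ℤ) ^ i)]
    rw [← Finset.mul_sum, mul_comm, geom_sum_mul]
  omega

lemma iterConv_supp (l : ℕ) (hl : 1 ≤ l) (w : ℕ → ℤ → ℝ) :
    ∀ k, (∀ i ≤ k, ∀ s : ℤ, (s < 0 ∨ (l : ℤ) ≤ s) → w i s = 0) →
    ∀ t : ℤ, (t < 0 ∨ (l : ℤ) ^ (k+1) ≤ t) → iterConv l w k t = 0 := by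
  intro k
  induction k with
  | zero =>
    intro h t ht
    simpa [iterConv] using h 0 le_rfl t (by simpa using ht)
  | succ k ih =>
    intro h t ht
    have hz : ∀ z : ℤ, w (k+1) z * iterConv l w k (t - (l : ℤ) ^ (k+1) * z) = 0 := by
      intro z
      by_cases hcz : z < 0 ∨ (l : ℤ) ≤ z
      · rw [h (k+1) le_rfl z hcz, zero_mul]
      · push_neg at hcz
        obtain ⟨hz0, hzl⟩ := hcz
        have hp : (0:ℤ) < (l : ℤ) ^ (k+1) := pow_pos (by exact_mod_cast hl) _
        have : iterConv l w k (t - (l : ℤ) ^ (k+1) * z) = 0 := by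
          apply ih (fun i hi => h i (Nat.le_succ_of_le hi))
          rcases ht with ht | ht
          · left; nlinarith
          · right
            have hpk : (l : ℤ) ^ (k+1+1) = (l : ℤ) ^ (k+1) * (l : ℤ) := by ring
            rw [hpk] at ht
            nlinarith
        rw [this, mul_zero]
    show dconv (w (k+1)) (iterConv l w k) ((l : ℤ) ^ (k+1)) t = 0
    unfold dconv
    simp only [hz]
    exact tsum_zero

lemma iterConv_val (l : ℕ) (hl : 1 ≤ l) (w : ℕ → ℤ → ℝ) :
    ∀ k, (∀ i ≤ k, ∀ s : ℤ, (s < 0 ∨ (l : ℤ) ≤ s) → w i s = 0) →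
    ∀ s : Fin (k+1) → Fin l,
      iterConv l w k (∑ i : Fin (k+1), ((s i : ℕ) : ℤ) * (l : ℤ) ^ (i : ℕ))
        = ∏ i : Fin (k+1), w i ((s i : ℕ) : ℤ) := by
  intro k
  induction k with
  | zero => intro _ s; simp [iterConv]
  | succ k ih =>
    intro h s
    set r : ℤ := ∑ i : Fin (k+1), ((s i.castSucc : ℕ) : ℤ) * (l : ℤ) ^ (i : ℕ) with hr
    set d : ℤ := ((s (Fin.last (k+1)) : ℕ) : ℤ) with hd
    have hsum : ∑ i : Fin (k+2), ((s i : ℕ) : ℤ) * (l : ℤ) ^ (i : ℕ)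
        = r + d * (l : ℤ) ^ (k+1) := by
      rw [Fin.sum_univ_castSucc]
      simp [hr, hd]
    have hr0 : 0 ≤ r := digit_sum_nonneg l k _
    have hrlt : r < (l : ℤ) ^ (k+1) := digit_sum_lt l k hl _
    have hp : (0:ℤ) < (l : ℤ) ^ (k+1) := pow_pos (by exact_mod_cast hl) _
    show dconv (w (k+1)) (iterConv l w k) ((l : ℤ) ^ (k+1))
        (∑ i : Fin (k+2), ((s i : ℕ) : ℤ) * (l : ℤ) ^ (i : ℕ)) = _
    unfold dconv
    rw [hsum]
    have hsingle : ∀ z : ℤ, z ≠ d →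
        w (k+1) z * iterConv l w k (r + d * (l : ℤ) ^ (k+1) - (l : ℤ) ^ (k+1) * z) = 0 := by
      intro z hzd
      by_cases hcz : z < 0 ∨ (l : ℤ) ≤ z
      · rw [h (k+1) le_rfl z hcz, zero_mul]
      · push_neg at hcz
        obtain ⟨hz0, hzl⟩ := hcz
        have : iterConv l w k (r + d * (l : ℤ) ^ (k+1) - (l : ℤ) ^ (k+1) * z) = 0 := by
          apply iterConv_supp l hl w k (fun i hi => h i (Nat.le_succ_of_le hi))
          rcases lt_or_gt_of_ne hzd with hlt | hgt
          · right; nlinarith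
          · left; nlinarith
        rw [this, mul_zero]
    rw [tsum_eq_single d hsingle]
    have harg : r + d * (l : ℤ) ^ (k+1) - (l : ℤ) ^ (k+1) * d = r := by ring
    rw [harg, ih (fun i hi => h i (Nat.le_succ_of_le hi)) (fun i => s i.castSucc)]
    rw [Fin.prod_univ_castSucc (f := fun i : Fin (k+2) => w i ((s i : ℕ) : ℤ)), mul_comm]
    simp only [hd, Fin.coe_castSucc, Fin.val_last]

theorem stmt5 (l K : ℕ) (hl : 1 ≤ l) (hK : 1 ≤ K) (w : ℕ → ℤ → ℝ)
    (hw : ∀ k < K, ∀ s : ℤ, (s < 0 ∨ (l : ℤ) ≤ s) → w k s = 0) :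
    ∀ idx : Fin K → Fin l,
      tens l K (iterConv l w (K - 1)) idx = ∏ i : Fin K, w i ((idx i : ℕ) : ℤ) := by
  obtain ⟨k, rfl⟩ : ∃ k, K = k + 1 := ⟨K - 1, (Nat.succ_pred_eq_of_pos hK).symm⟩
  intro idx
  have := iterConv_val l hl w k (fun i hi => hw i (Nat.lt_succ_of_le hi)) idx
  simpa [tens] using this
end

section
/- Every order-K tensor A : (Fin l)^K → ℝ can be written as a finite sum of outer products of vectors: A = Σ_{j=1}^{N} u_j⁽ᴷ⁾ ⊗ u_j⁽ᴷ⁻¹⁾ ⊗ ⋯ ⊗ u_j⁽¹⁾ with u_j⁽ᵏ⁾ ∈ ℝ^l and N ≤ l^{K−1}. Consequently (using that each outer product is the tensorisation of an iterated dilated convolution), every sequence ρ supported on {0,...,l^K − 1} can be written as a finite sum of iterated dilated convolutions of filters of size l. -/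
/-- Base-`l` value of a digit string. -/
def valZ (l k : ℕ) (d : Fin k → Fin l) : ℤ := ∑ i, ((d i : ℕ) : ℤ) * (l:ℤ)^(i:ℕ)

lemma part1' (l K' : ℕ) (A : (Fin (K'+1) → Fin l) → ℝ) :
    ∃ N : ℕ, N ≤ l ^ K' ∧
      ∃ u : Fin N → Fin (K'+1) → Fin l → ℝ,
        ∀ idx, A idx = ∑ j : Fin N, ∏ k, u j k (idx k) := by
  refine ⟨l ^ K', le_refl _, ?_⟩
  set e := (finFunctionFinEquiv (m := l) (n := K')).symm with he
  refine ⟨fun j => Fin.cons (fun i => A (Fin.cons i (e j)))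
    (fun k i => if i = e j k then 1 else 0), ?_⟩
  intro idx
  have key : ∀ j : Fin (l ^ K'),
      (∏ k, Fin.cons (α := fun _ => Fin l → ℝ) (fun i => A (Fin.cons i (e j)))
        (fun k i => if i = e j k then 1 else 0) k (idx k))
      = A (Fin.cons (idx 0) (e j)) * (if Fin.tail idx = e j then 1 else 0) := by
    intro j
    rw [Fin.prod_univ_succ]
    simp only [Fin.cons_zero, Fin.cons_succ]
    congr 1
    rw [Finset.prod_boole]
    congr 1
    simp only [eq_iff_iff]
    constructor
    · intro h; funext i; exact h i (Finset.mem_univ i)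
    · intro h i _; exact congrFun h i
  simp only [key]
  rw [Equiv.sum_comp e (fun m => A (Fin.cons (idx 0) m) * (if Fin.tail idx = m then 1 else 0))]
  rw [Finset.sum_eq_single (Fin.tail idx)]
  · simp [Fin.cons_self_tail]
  · intro b _ hb; simp [Ne.symm hb]
  · intro h; exact absurd (Finset.mem_univ _) h

lemma sum_delta (l : ℕ) (g : ℤ → ℝ) (hg : ∀ s : ℤ, (s < 0 ∨ (l:ℤ) ≤ s) → g s = 0) (t : ℤ) :
    ∑ a : Fin l, (if t = (a:ℤ) then 1 else 0) * g (a:ℤ) = g t := by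
  by_cases ht : 0 ≤ t ∧ t < l
  · have htn : t.toNat < l := by omega
    rw [Finset.sum_eq_single (⟨t.toNat, htn⟩ : Fin l)]
    · simp [ht.1, Int.toNat_of_nonneg ht.1]
    · intro b _ hb
      have : t ≠ (b:ℤ) := by
        intro h; apply hb; apply Fin.ext; show (b:ℕ) = t.toNat; omega
      simp [this]
    · intro h; exact absurd (Finset.mem_univ _) h
  · rw [hg t (by omega)]
    apply Finset.sum_eq_zero
    intro a _
    have : t ≠ (a:ℤ) := by
      intro h
      have := a.isLt
      omega
    simp [this]

lemma iterConv_eq (l : ℕ) (w : ℕ → ℤ → ℝ)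
    (hw : ∀ k (s : ℤ), (s < 0 ∨ (l:ℤ) ≤ s) → w k s = 0) :
    ∀ k (t : ℤ), iterConv l w k t = ∑ d : Fin (k+1) → Fin l,
      (if t = valZ l (k+1) d then 1 else 0) * ∏ i : Fin (k+1), w (i:ℕ) ((d i : ℕ) : ℤ) := by
  intro k
  induction k with
  | zero =>
    intro t
    show w 0 t = _
    rw [← sum_delta l (w 0) (hw 0) t]
    apply Fintype.sum_equiv (Equiv.funUnique (Fin 1) (Fin l)).symm
    intro a
    simp [valZ, Fin.sum_univ_one, Fin.prod_univ_one, Equiv.funUnique]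
  | succ k ih =>
    intro t
    show dconv (w (k+1)) (iterConv l w k) ((l:ℤ)^(k+1)) t = _
    unfold dconv
    set S : Finset ℤ := Finset.map ⟨fun a : Fin l => (a:ℤ), Nat.cast_injective.comp Fin.val_injective⟩ Finset.univ with hS
    rw [tsum_eq_sum (s := S) ?vanish]
    case vanish =>
      intro b hb
      have hb' : b < 0 ∨ (l:ℤ) ≤ b := by
        by_contra hc
        push_neg at hc
        apply hb
        rw [hS]
        simp only [Finset.mem_map, Finset.mem_univ, Function.Embedding.coeFn_mk, true_and]
        exact ⟨⟨b.toNat, by omega⟩, by simp; omega⟩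
      rw [hw (k+1) b hb', zero_mul]
    rw [Finset.sum_map]
    simp only [Function.Embedding.coeFn_mk]
    rw [← Equiv.sum_comp (⟨fun p => Fin.snoc p.1 p.2, fun d => (Fin.init d, d (Fin.last _)),
       fun p => by simp, fun d => by simp [Fin.snoc_init_self]⟩ :
       ((Fin (k+1) → Fin l) × Fin l) ≃ (Fin (k+2) → Fin l))
       (fun d => (if t = valZ l (k+2) d then 1 else 0) * ∏ i : Fin (k+2), w (i:ℕ) ((d i : ℕ) : ℤ))]
    simp only [Equiv.coe_fn_mk]
    rw [Fintype.sum_prod_type]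
    rw [Finset.sum_comm]
    apply Finset.sum_congr rfl
    intro a _
    rw [ih, Finset.mul_sum]
    apply Finset.sum_congr rfl
    intro d _
    show w (k+1) (a:ℤ) * ((if t - (l:ℤ)^(k+1) * a = valZ l (k+1) d then 1 else 0) * _)
      = (if t = valZ l (k+2) (Fin.snoc d a) then 1 else 0) * ∏ i : Fin (k+2), w (i:ℕ) (((Fin.snoc d a : Fin (k+2) → Fin l) i : ℕ) : ℤ)
    have hval : valZ l (k+2) (Fin.snoc d a) = valZ l (k+1) d + (a:ℤ) * (l:ℤ)^(k+1) := by
      unfold valZ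
      rw [Fin.sum_univ_castSucc]
      simp [Fin.snoc_castSucc, Fin.snoc_last]
    have hprod : ∏ i : Fin (k+2), w (i:ℕ) (((Fin.snoc d a : Fin (k+2) → Fin l) i : ℕ) : ℤ)
        = (∏ i : Fin (k+1), w (i:ℕ) ((d i : ℕ) : ℤ)) * w (k+1) (a:ℤ) := by
      rw [Fin.prod_univ_castSucc]
      simp [Fin.snoc_castSucc, Fin.snoc_last]
    rw [hval, hprod]
    have hiff : (t - (l:ℤ)^(k+1) * a = valZ l (k+1) d) ↔ (t = valZ l (k+1) d + (a:ℤ) * (l:ℤ)^(k+1)) := by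
      constructor <;> intro h <;> [linarith [mul_comm ((l:ℤ)^(k+1)) ((a:ℕ):ℤ)]; linarith [mul_comm ((l:ℤ)^(k+1)) ((a:ℕ):ℤ)]]
    split_ifs with h1 h2 h2
    · ring
    · exact absurd (hiff.mp h1) h2
    · exact absurd (hiff.mpr h2) h1
    · ring

lemma sum_delta' (l K : ℕ) (ρ : ℤ → ℝ)
    (hρ : ∀ t : ℤ, (t < 0 ∨ (l:ℤ)^(K+1) ≤ t) → ρ t = 0) (t : ℤ) :
    ∑ d : Fin (K+1) → Fin l, (if t = valZ l (K+1) d then 1 else 0) * ρ (valZ l (K+1) d) = ρ t := by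
  have hval : ∀ d : Fin (K+1) → Fin l, valZ l (K+1) d = ((finFunctionFinEquiv d : ℕ) : ℤ) := by
    intro d
    rw [finFunctionFinEquiv_apply]
    unfold valZ
    push_cast
    rfl
  rw [← Equiv.sum_comp (finFunctionFinEquiv (m := l) (n := K+1)).symm
    (fun d => (if t = valZ l (K+1) d then 1 else 0) * ρ (valZ l (K+1) d))]
  have : ∀ m : Fin (l^(K+1)), valZ l (K+1) (finFunctionFinEquiv.symm m) = ((m:ℕ):ℤ) := by
    intro m; rw [hval, Equiv.apply_symm_apply]
  simp only [this]
  apply sum_delta (l^(K+1)) ρ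
  intro s hs
  apply hρ
  rcases hs with h | h
  · exact Or.inl h
  · right; exact_mod_cast h

theorem stmt6 (l K : ℕ) (hl : 1 ≤ l) (hK : 1 ≤ K) :
    (∀ A : (Fin K → Fin l) → ℝ, ∃ N : ℕ, N ≤ l ^ (K - 1) ∧
      ∃ u : Fin N → Fin K → Fin l → ℝ,
        ∀ idx : Fin K → Fin l, A idx = ∑ j : Fin N, ∏ k : Fin K, u j k (idx k)) ∧
    (∀ ρ : ℤ → ℝ, (∀ t : ℤ, (t < 0 ∨ (l : ℤ) ^ K ≤ t) → ρ t = 0) →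
      ∃ N : ℕ, N ≤ l ^ (K - 1) ∧ ∃ w : Fin N → ℕ → ℤ → ℝ,
        (∀ j, ∀ k < K, ∀ s : ℤ, (s < 0 ∨ (l : ℤ) ≤ s) → w j k s = 0) ∧
        ∀ t : ℤ, ρ t = ∑ j : Fin N, iterConv l (w j) (K - 1) t) := by
  obtain ⟨K, rfl⟩ : ∃ K', K = K' + 1 := ⟨K - 1, (Nat.succ_pred_eq_of_pos hK).symm⟩
  simp only [Nat.add_sub_cancel]
  constructor
  · exact part1' l K
  · intro ρ hρ
    obtain ⟨N, hN, u, hu⟩ := part1' l K (fun d => ρ (valZ l (K+1) d))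
    set w : Fin N → ℕ → ℤ → ℝ := fun j k s =>
      if hk : k < K + 1 then
        (if hs : 0 ≤ s ∧ s < (l:ℤ) then u j ⟨k, hk⟩ ⟨s.toNat, by omega⟩ else 0)
      else 0 with hwdef
    have hsupp : ∀ (j : Fin N) (k : ℕ) (s : ℤ), s < 0 ∨ (l:ℤ) ≤ s → w j k s = 0 := by
      intro j k s hs
      rw [hwdef]
      by_cases hk : k < K + 1
      · simp only [dif_pos hk]; rw [dif_neg (by omega)]
      · simp only [dif_neg hk]
    refine ⟨N, hN, w, fun j k _ s hs => hsupp j k s hs, ?_⟩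
    intro t
    have hiter : ∀ j : Fin N, iterConv l (w j) K t = ∑ d : Fin (K+1) → Fin l,
        (if t = valZ l (K+1) d then 1 else 0) * ∏ i : Fin (K+1), w j (i:ℕ) ((d i : ℕ) : ℤ) :=
      fun j => iterConv_eq l (w j) (hsupp j) K t
    simp only [hiter]
    rw [Finset.sum_comm]
    have hterm : ∀ d : Fin (K+1) → Fin l,
        (∑ j : Fin N, (if t = valZ l (K+1) d then 1 else 0) * ∏ i : Fin (K+1), w j (i:ℕ) ((d i : ℕ) : ℤ))
        = (if t = valZ l (K+1) d then 1 else 0) * ρ (valZ l (K+1) d) := by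
      intro d
      rw [← Finset.mul_sum]
      congr 1
      rw [hu d]
      apply Finset.sum_congr rfl
      intro j _
      apply Finset.prod_congr rfl
      intro i _
      rw [hwdef]
      have hd : (0:ℤ) ≤ ((d i : ℕ) : ℤ) ∧ ((d i : ℕ) : ℤ) < (l:ℤ) := by
        constructor
        · positivity
        · exact_mod_cast (d i).isLt
      dsimp only
      rw [dif_pos i.isLt, dif_pos hd]
      simp
    simp only [hterm]
    exact (sum_delta' l K ρ hρ t).symm
end

section
/- Low-rank approximation bound for HOSVD: let A, Â ∈ ℝ^{l×⋯×l} be order-K tensors whose mode-k flattenings have ranks r₁,...,r_K and r'₁,...,r'_K respectively with r'_k ≤ r_k. Then inf over all such Â of ‖A − Â‖² ≤ Σ_{k=1}^K Σ_{i=r'_k+1}^{r_k} (σᵢ⁽ᵏ⁾)², where σ₁⁽ᵏ⁾ ≥ ⋯ ≥ σ_{r_k}⁽ᵏ⁾ are the singular values of the mode-k flattening A_{(k)}. -/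
open scoped Matrix

/-- Mode-`k` flattening of an order-`K` tensor. -/
noncomputable def flatten {l K : ℕ} (A : (Fin K → Fin l) → ℝ) (k : Fin K) :
    Matrix (Fin l) ({i : Fin K // i ≠ k} → Fin l) ℝ :=
  Matrix.of fun a b => A (fun i => if h : i = k then a else b ⟨i, h⟩)

/-- The singular values of a matrix `M : Matrix (Fin l) n ℝ`, sorted in
descending order: the square roots of the eigenvalues of `M * Mᴴ`. -/
noncomputable def svalsDesc {l : ℕ} {n : Type*} [Fintype n] [DecidableEq n]
    (M : Matrix (Fin l) n ℝ) : Fin l → ℝ :=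
  let e : Fin l → ℝ := fun i =>
    Real.sqrt ((Matrix.isHermitian_mul_conjTranspose_self M).eigenvalues i)
  fun i => e (Tuple.sort (fun j => -e j) i)

open Matrix Finset
set_option linter.unusedSectionVars false

section TensorAux
variable {l K : ℕ}

noncomputable def modeMul (P : Matrix (Fin l) (Fin l) ℝ) (k : Fin K)
    (A : (Fin K → Fin l) → ℝ) : (Fin K → Fin l) → ℝ :=
  fun idx => ∑ a, P (idx k) a * A (Function.update idx k a)

noncomputable def tdot (A B : (Fin K → Fin l) → ℝ) : ℝ := ∑ idx, A idx * B idx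

noncomputable def mdot {m : Type*} {n : Type*} [Fintype m] [Fintype n]
    (M N : Matrix m n ℝ) : ℝ := ∑ a, ∑ b, M a b * N a b

lemma mdot_eq_trace {m n : Type*} [Fintype m] [Fintype n] (M N : Matrix m n ℝ) :
    mdot M N = Matrix.trace (M * Nᵀ) := by
  simp [mdot, Matrix.trace, Matrix.mul_apply, Matrix.diag]

lemma modeMul_sub (P : Matrix (Fin l) (Fin l) ℝ) (k : Fin K)
    (A B : (Fin K → Fin l) → ℝ) :
    modeMul P k (A - B) = modeMul P k A - modeMul P k B := by
  funext idx
  simp [modeMul, mul_sub, Finset.sum_sub_distrib]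

lemma modeMul_modeMul (P Q : Matrix (Fin l) (Fin l) ℝ) (k : Fin K)
    (A : (Fin K → Fin l) → ℝ) :
    modeMul P k (modeMul Q k A) = modeMul (P * Q) k A := by
  funext idx
  simp only [modeMul, Matrix.mul_apply, Function.update_self,
    Function.update_idem, Finset.sum_mul, Finset.mul_sum]
  rw [Finset.sum_comm]
  exact Finset.sum_congr rfl fun b _ => Finset.sum_congr rfl fun a _ => by ring

lemma modeMul_comm (P Q : Matrix (Fin l) (Fin l) ℝ) {j k : Fin K} (h : j ≠ k)
    (A : (Fin K → Fin l) → ℝ) :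
    modeMul P j (modeMul Q k A) = modeMul Q k (modeMul P j A) := by
  funext idx
  simp only [modeMul, Finset.mul_sum]
  rw [Finset.sum_comm]
  refine Finset.sum_congr rfl fun b _ => Finset.sum_congr rfl fun a _ => ?_
  rw [Function.update_of_ne h, Function.update_of_ne (Ne.symm h),
    Function.update_comm h]
  ring

lemma flatten_modeMul (P : Matrix (Fin l) (Fin l) ℝ) (k : Fin K)
    (A : (Fin K → Fin l) → ℝ) :
    flatten (modeMul P k A) k = P * flatten A k := by
  ext a b
  simp only [flatten, modeMul, Matrix.of_apply, Matrix.mul_apply, dif_pos rfl]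
  refine Finset.sum_congr rfl fun c _ => ?_
  have : Function.update (fun i => if h : i = k then a else b ⟨i, h⟩) k c
      = fun i => if h : i = k then c else b ⟨i, h⟩ := by
    funext i
    by_cases h : i = k
    · subst h; simp
    · simp [Function.update_of_ne h, h]
  rw [this]
  simp

def modeEquiv (k : Fin K) : (Fin K → Fin l) ≃ (Fin l × ({i : Fin K // i ≠ k} → Fin l)) where
  toFun idx := (idx k, fun i => idx i.1)
  invFun p := fun i => if h : i = k then p.1 else p.2 ⟨i, h⟩
  left_inv idx := by
    funext i
    by_cases h : i = k
    · subst h; simp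
    · simp [h]
  right_inv p := by
    refine Prod.ext (by simp) ?_
    funext i
    simp [i.2]

lemma flatten_apply (A : (Fin K → Fin l) → ℝ) (k : Fin K) (idx : Fin K → Fin l) :
    flatten A k (idx k) (fun i => idx i.1) = A idx := by
  simp only [flatten, Matrix.of_apply]
  congr 1
  funext i
  by_cases h : i = k
  · subst h; simp
  · simp [h]

lemma tdot_eq_mdot (k : Fin K) (A B : (Fin K → Fin l) → ℝ) :
    tdot A B = mdot (flatten A k) (flatten B k) := by
  rw [tdot, mdot]
  calc ∑ idx, A idx * B idx
      = ∑ p : Fin l × ({i : Fin K // i ≠ k} → Fin l),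
          flatten A k p.1 p.2 * flatten B k p.1 p.2 :=
        Fintype.sum_equiv (modeEquiv k) _ _
          (fun idx => by simp [modeEquiv, flatten_apply])
    _ = ∑ a, ∑ b, flatten A k a b * flatten B k a b := by rw [Fintype.sum_prod_type]


end TensorAux

section Spec
variable {l : ℕ} {n : Type*} [Fintype n] [DecidableEq n] (M : Matrix (Fin l) n ℝ)

noncomputable def specH := Matrix.isHermitian_mul_conjTranspose_self M

noncomputable def evec (j : Fin l) : Fin l → ℝ := fun a =>
  ((specH M).eigenvectorUnitary : Matrix (Fin l) (Fin l) ℝ) a j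

noncomputable def sperm : Equiv.Perm (Fin l) :=
  Tuple.sort (fun j => -Real.sqrt ((specH M).eigenvalues j))

lemma svalsDesc_sq (i : Fin l) :
    (svalsDesc M i) ^ 2 = (specH M).eigenvalues (sperm M i) := by
  simp only [svalsDesc, sperm, specH]
  exact Real.sq_sqrt (Matrix.eigenvalues_self_mul_conjTranspose_nonneg M _)

lemma evec_orth (i j : Fin l) :
    ∑ a, evec M i a * evec M j a = if i = j then 1 else 0 := by
  have h := (Matrix.mem_unitaryGroup_iff'.mp ((specH M).eigenvectorUnitary).2)
  have := congrFun (congrFun (congrArg (fun X => (X : Matrix (Fin l) (Fin l) ℝ)) h) i) j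
  simpa [Matrix.mul_apply, Matrix.one_apply, evec, Matrix.conjTranspose_apply,
    mul_comm] using this

lemma spec_decomp : M * Mᴴ = ∑ j, (specH M).eigenvalues j • Matrix.vecMulVec (evec M j) (evec M j) := by
  refine ((specH M).spectral_theorem).trans ?_
  ext a b
  simp [Matrix.mul_apply, Matrix.diagonal_apply, Matrix.sum_apply, Matrix.vecMulVec_apply,
    Finset.sum_mul, evec, Matrix.conjTranspose_apply, mul_comm, mul_assoc, mul_left_comm]

end Spec

section Proj
set_option linter.unusedSectionVars false
variable {l : ℕ} {n : Type*} [Fintype n] [DecidableEq n] (M : Matrix (Fin l) n ℝ)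

lemma vecMulVec_mul_vecMulVec (v w x y : Fin l → ℝ) :
    Matrix.vecMulVec v w * Matrix.vecMulVec x y
      = (∑ a, w a * x a) • Matrix.vecMulVec v y := by
  ext a b
  simp only [Matrix.mul_apply, Matrix.vecMulVec_apply, Matrix.smul_apply,
    Finset.sum_mul, smul_eq_mul]
  refine Finset.sum_congr rfl fun c _ => by ring

noncomputable def proj (S : Finset (Fin l)) : Matrix (Fin l) (Fin l) ℝ :=
  ∑ i ∈ S, Matrix.vecMulVec (evec M (sperm M i)) (evec M (sperm M i))

lemma proj_transpose (S : Finset (Fin l)) : (proj M S)ᵀ = proj M S := by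
  simp only [proj, Matrix.transpose_sum]
  refine Finset.sum_congr rfl fun i _ => ?_
  ext a b
  simp [Matrix.vecMulVec_apply, mul_comm]

lemma sum_evec (a b : Fin l) :
    ∑ j, evec M j a * evec M j b = if a = b then 1 else 0 := by
  have h := (Matrix.mem_unitaryGroup_iff.mp ((specH M).eigenvectorUnitary).2)
  have := congrFun (congrFun (congrArg (fun X => (X : Matrix (Fin l) (Fin l) ℝ)) h) a) b
  simpa [Matrix.mul_apply, Matrix.one_apply, evec, Matrix.conjTranspose_apply,
    mul_comm] using this

lemma proj_univ : proj M Finset.univ = 1 := by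
  ext a b
  rw [proj, Matrix.sum_apply]
  have : ∑ i : Fin l, evec M (sperm M i) a * evec M (sperm M i) b
      = ∑ j, evec M j a * evec M j b := Fintype.sum_equiv (sperm M) _ _ (fun i => rfl)
  simp only [Matrix.vecMulVec_apply]
  rw [this, sum_evec M a b, Matrix.one_apply]

lemma evec_sperm_orth (i j : Fin l) :
    ∑ a, evec M (sperm M i) a * evec M (sperm M j) a = if i = j then 1 else 0 := by
  rw [evec_orth]
  simp [EmbeddingLike.apply_eq_iff_eq]

lemma proj_mul_proj (S T : Finset (Fin l)) :
    proj M S * proj M T = proj M (S ∩ T) := by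
  rw [proj, proj, Finset.sum_mul_sum]
  have : ∀ i ∈ S, ∀ j ∈ T,
      Matrix.vecMulVec (evec M (sperm M i)) (evec M (sperm M i)) *
        Matrix.vecMulVec (evec M (sperm M j)) (evec M (sperm M j))
      = if i = j then Matrix.vecMulVec (evec M (sperm M i)) (evec M (sperm M j)) else 0 := by
    intro i _ j _
    rw [vecMulVec_mul_vecMulVec, evec_sperm_orth]
    split <;> simp
  rw [Finset.sum_congr rfl (fun i hi => Finset.sum_congr rfl (fun j hj => this i hi j hj))]
  simp [proj, Finset.sum_ite_eq, Finset.sum_ite_mem]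

end Proj

section Key
set_option linter.unusedSectionVars false
variable {l : ℕ} {n : Type*} [Fintype n] [DecidableEq n] (M : Matrix (Fin l) n ℝ)

lemma proj_mul_G (T : Finset (Fin l)) :
    proj M T * (M * Mᴴ) = ∑ i ∈ T, (specH M).eigenvalues (sperm M i) •
      Matrix.vecMulVec (evec M (sperm M i)) (evec M (sperm M i)) := by
  conv_lhs => rw [spec_decomp M]
  rw [proj, Finset.sum_mul]
  refine Finset.sum_congr rfl fun i _ => ?_
  rw [Finset.mul_sum]
  have : ∀ j, Matrix.vecMulVec (evec M (sperm M i)) (evec M (sperm M i)) *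
      ((specH M).eigenvalues j • Matrix.vecMulVec (evec M j) (evec M j))
      = if sperm M i = j then (specH M).eigenvalues j •
          Matrix.vecMulVec (evec M (sperm M i)) (evec M j) else 0 := by
    intro j
    rw [Matrix.mul_smul, vecMulVec_mul_vecMulVec, evec_orth]
    split <;> simp [smul_smul]
  rw [Finset.sum_congr rfl fun j _ => this j]
  simp

lemma trace_proj_G (T : Finset (Fin l)) :
    Matrix.trace (proj M T * (M * Mᴴ) * proj M T)
      = ∑ i ∈ T, (specH M).eigenvalues (sperm M i) := by
  rw [Matrix.trace_mul_comm, ← Matrix.mul_assoc, proj_mul_proj, Finset.inter_self,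
    proj_mul_G]
  rw [Matrix.trace_sum]
  refine Finset.sum_congr rfl fun i _ => ?_
  rw [Matrix.trace_smul]
  have : Matrix.trace (Matrix.vecMulVec (evec M (sperm M i)) (evec M (sperm M i))) = 1 := by
    rw [Matrix.trace]
    simpa [Matrix.diag, Matrix.vecMulVec_apply] using evec_sperm_orth M i i
  rw [this]
  simp

lemma proj_rank_le (S : Finset (Fin l)) : (proj M S).rank ≤ S.card := by
  classical
  let B : Matrix (Fin l) {x // x ∈ S} ℝ := Matrix.of fun a i => evec M (sperm M i.1) a
  let C : Matrix {x // x ∈ S} (Fin l) ℝ := Matrix.of fun i b => evec M (sperm M i.1) b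
  have hBC : proj M S = B * C := by
    ext a b
    rw [proj, Matrix.sum_apply, Matrix.mul_apply, ← Finset.sum_attach S]
    simp [B, C, Matrix.vecMulVec_apply]
  calc (proj M S).rank = (B * C).rank := by rw [hBC]
    _ ≤ B.rank := Matrix.rank_mul_le_left B C
    _ ≤ Fintype.card {x // x ∈ S} := Matrix.rank_le_card_width B
    _ = S.card := Fintype.card_coe S

lemma matrix_key (r' : ℕ) :
    ∃ P : Matrix (Fin l) (Fin l) ℝ, Pᵀ = P ∧ P * P = P ∧ P.rank ≤ r' ∧
      mdot ((1 - P) * M) ((1 - P) * M)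
        = ∑ i ∈ Finset.univ.filter (fun i : Fin l => r' ≤ (i : ℕ)),
            (svalsDesc M i) ^ 2 := by
  classical
  set S : Finset (Fin l) := Finset.univ.filter (fun i => (i : ℕ) < r') with hS
  set T : Finset (Fin l) := Finset.univ.filter (fun i : Fin l => r' ≤ (i : ℕ)) with hT
  have hST : proj M S + proj M T = 1 := by
    rw [proj, proj, ← Finset.sum_union (by
      simp [hS, hT, Finset.disjoint_filter, not_le])]
    rw [← proj_univ M, proj]
    congr 1
    simp only [hS, hT, ← Finset.filter_or]
    simp [lt_or_ge]
  have h1P : (1 : Matrix (Fin l) (Fin l) ℝ) - proj M S = proj M T := by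
    rw [← hST, add_sub_cancel_left]
  refine ⟨proj M S, proj_transpose M S, by
      simpa using proj_mul_proj M S S, ?_, ?_⟩
  · calc (proj M S).rank ≤ S.card := proj_rank_le M S
      _ ≤ r' := by
        have : S.card ≤ (Finset.range r').card := by
          refine Finset.card_le_card_of_injOn (fun i => (i : ℕ)) ?_ ?_
          · intro i hi
            simp only [hS, Finset.mem_filter] at hi
            simpa [List.mem_filter] using hi
          · exact fun a _ b _ h => Fin.val_injective h
        simpa using this
  · rw [h1P, mdot_eq_trace, Matrix.transpose_mul, proj_transpose]
    have hMT : Mᵀ = Mᴴ := by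
      ext a b; simp [Matrix.conjTranspose_apply]
    calc Matrix.trace (proj M T * M * (Mᵀ * proj M T))
        = Matrix.trace (proj M T * (M * Mᴴ) * proj M T) := by
          rw [hMT]; simp only [Matrix.mul_assoc]
      _ = ∑ i ∈ T, (specH M).eigenvalues (sperm M i) := trace_proj_G M T
      _ = ∑ i ∈ T, (svalsDesc M i) ^ 2 :=
          Finset.sum_congr rfl fun i _ => (svalsDesc_sq M i).symm

end Key

section ErrBound
variable {l K : ℕ}

lemma tdot_comm (A B : (Fin K → Fin l) → ℝ) : tdot A B = tdot B A := by
  simp [tdot, mul_comm]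

lemma tdot_self_nonneg (A : (Fin K → Fin l) → ℝ) : 0 ≤ tdot A A :=
  Finset.sum_nonneg fun idx _ => mul_self_nonneg _

lemma tdot_add_left (A B C : (Fin K → Fin l) → ℝ) :
    tdot (A + B) C = tdot A C + tdot B C := by
  simp [tdot, add_mul, Finset.sum_add_distrib]

lemma tdot_add_right (A B C : (Fin K → Fin l) → ℝ) :
    tdot A (B + C) = tdot A B + tdot A C := by
  simp [tdot, mul_add, Finset.sum_add_distrib]

lemma tdot_zero_right (A : (Fin K → Fin l) → ℝ) :
    tdot A (0 : (Fin K → Fin l) → ℝ) = 0 := by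
  simp [tdot]

lemma mdot_mul_left {m : Type*} [Fintype m] [DecidableEq m]
    {n : Type*} [Fintype n] (P : Matrix m m ℝ) (M N : Matrix m n ℝ) :
    mdot (P * M) N = mdot M (Pᵀ * N) := by
  rw [mdot_eq_trace, mdot_eq_trace, Matrix.transpose_mul, Matrix.transpose_transpose,
    Matrix.mul_assoc P, Matrix.trace_mul_comm, Matrix.mul_assoc]

lemma tdot_modeMul_left (P : Matrix (Fin l) (Fin l) ℝ) (k : Fin K)
    (A B : (Fin K → Fin l) → ℝ) :
    tdot (modeMul P k A) B = tdot A (modeMul Pᵀ k B) := by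
  rw [tdot_eq_mdot k, tdot_eq_mdot k, flatten_modeMul, flatten_modeMul, mdot_mul_left]

lemma flatten_sub (A B : (Fin K → Fin l) → ℝ) (k : Fin K) :
    flatten (A - B) k = flatten A k - flatten B k := by
  ext a b
  simp [flatten]

/-- Pythagoras: if `tdot X Y = 0` then `tdot (X+Y) (X+Y) = tdot X X + tdot Y Y`. -/
lemma tdot_pythagoras {X Y : (Fin K → Fin l) → ℝ} (h : tdot X Y = 0) :
    tdot (X + Y) (X + Y) = tdot X X + tdot Y Y := by
  rw [tdot_add_left, tdot_add_right, tdot_add_right, h, tdot_comm Y X, h]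
  ring

lemma modeMul_of_proj_zero {P : Matrix (Fin l) (Fin l) ℝ} (hsym : Pᵀ = P)
    (hidem : P * P = P) (k : Fin K) (A Z : (Fin K → Fin l) → ℝ) :
    tdot (A - modeMul P k A) (modeMul P k Z) = 0 := by
  rw [tdot_comm, tdot_modeMul_left, hsym]
  have : modeMul P k (A - modeMul P k A) = 0 := by
    rw [modeMul_sub, modeMul_modeMul, hidem, sub_self]
  rw [this, tdot_zero_right]

lemma tdot_modeMul_le {P : Matrix (Fin l) (Fin l) ℝ} (hsym : Pᵀ = P)
    (hidem : P * P = P) (k : Fin K) (Z : (Fin K → Fin l) → ℝ) :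
    tdot (modeMul P k Z) (modeMul P k Z) ≤ tdot Z Z := by
  have hd : Z = (Z - modeMul P k Z) + modeMul P k Z := by ring
  have horth : tdot (Z - modeMul P k Z) (modeMul P k Z) = 0 :=
    modeMul_of_proj_zero hsym hidem k Z Z
  calc tdot (modeMul P k Z) (modeMul P k Z)
      ≤ tdot (Z - modeMul P k Z) (Z - modeMul P k Z)
        + tdot (modeMul P k Z) (modeMul P k Z) :=
        le_add_of_nonneg_left (tdot_self_nonneg _)
    _ = tdot Z Z := by rw [← tdot_pythagoras horth, ← hd]

noncomputable def foldTen (P : Fin K → Matrix (Fin l) (Fin l) ℝ)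
    (L : List (Fin K)) (A : (Fin K → Fin l) → ℝ) : (Fin K → Fin l) → ℝ :=
  L.foldr (fun k B => modeMul (P k) k B) A

lemma foldTen_mem (P : Fin K → Matrix (Fin l) (Fin l) ℝ) (L : List (Fin K))
    (k : Fin K) (hk : k ∈ L) (A : (Fin K → Fin l) → ℝ) :
    ∃ C, foldTen P L A = modeMul (P k) k C := by
  induction L with
  | nil => simp at hk
  | cons j L ih =>
    by_cases h : j = k
    · subst h
      exact ⟨foldTen P L A, rfl⟩
    · have hk' : k ∈ L := by
        rcases List.mem_cons.mp hk with h' | h'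
        · exact absurd h'.symm h
        · exact h'
      obtain ⟨C, hC⟩ := ih hk'
      refine ⟨modeMul (P j) j C, ?_⟩
      show modeMul (P j) j (foldTen P L A) = _
      rw [hC, modeMul_comm _ _ h]

lemma foldTen_err (P : Fin K → Matrix (Fin l) (Fin l) ℝ)
    (hsym : ∀ k, (P k)ᵀ = P k) (hidem : ∀ k, P k * P k = P k)
    (L : List (Fin K)) (A : (Fin K → Fin l) → ℝ) :
    tdot (A - foldTen P L A) (A - foldTen P L A)
      ≤ (L.map (fun k =>
          tdot (A - modeMul (P k) k A) (A - modeMul (P k) k A))).sum := by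
  induction L with
  | nil => simp [foldTen, tdot]
  | cons k L ih =>
    have hfold : foldTen P (k :: L) A = modeMul (P k) k (foldTen P L A) := rfl
    set B := foldTen P L A with hB
    set X := A - modeMul (P k) k A with hX
    set Y := modeMul (P k) k (A - B) with hY
    have hdec : A - foldTen P (k :: L) A = X + Y := by
      rw [hfold, hX, hY, modeMul_sub]
      ring
    have horth : tdot X Y = 0 := modeMul_of_proj_zero (hsym k) (hidem k) k A (A - B)
    have hYle : tdot Y Y ≤ tdot (A - B) (A - B) :=
      tdot_modeMul_le (hsym k) (hidem k) k (A - B)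
    calc tdot (A - foldTen P (k :: L) A) (A - foldTen P (k :: L) A)
        = tdot X X + tdot Y Y := by rw [hdec, tdot_pythagoras horth]
      _ ≤ tdot X X + tdot (A - B) (A - B) := by linarith
      _ ≤ tdot X X + (L.map (fun k =>
            tdot (A - modeMul (P k) k A) (A - modeMul (P k) k A))).sum := by linarith
      _ = ((k :: L).map (fun k =>
            tdot (A - modeMul (P k) k A) (A - modeMul (P k) k A))).sum := by
          simp [hX]

end ErrBound

/-- Low-rank approximation bound for HOSVD: truncating the mode-`k` ranks to
`r' k` incurs squared Frobenius error at most the sum of the squared discarded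
singular values. -/
theorem stmt11 (l K : ℕ) (A : (Fin K → Fin l) → ℝ) (r' : Fin K → ℕ)
    (hr' : ∀ k, r' k ≤ (flatten A k).rank) :
    ∃ Ahat : (Fin K → Fin l) → ℝ,
      (∀ k, (flatten Ahat k).rank ≤ r' k) ∧
      ∑ idx : Fin K → Fin l, (A idx - Ahat idx) ^ 2 ≤
        ∑ k : Fin K, ∑ i ∈ Finset.univ.filter (fun i : Fin l => r' k ≤ (i : ℕ)),
          (svalsDesc (flatten A k) i) ^ 2 := by
  classical
  choose P hsym hidem hrank herr using fun k : Fin K => matrix_key (flatten A k) (r' k)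
  set L := List.finRange K with hL
  refine ⟨foldTen P L A, ?_, ?_⟩
  · intro k
    obtain ⟨C, hC⟩ := foldTen_mem P L k (by simp [hL]) A
    rw [hC, flatten_modeMul]
    exact le_trans (Matrix.rank_mul_le_left _ _) (hrank k)
  · have h1 : ∑ idx : Fin K → Fin l, (A idx - foldTen P L A idx) ^ 2
        = tdot (A - foldTen P L A) (A - foldTen P L A) := by
      simp [tdot, sq, Pi.sub_apply]
    rw [h1]
    refine le_trans (foldTen_err P hsym hidem L A) (le_of_eq ?_)
    have h2 : ∀ k : Fin K,
        tdot (A - modeMul (P k) k A) (A - modeMul (P k) k A)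
          = ∑ i ∈ Finset.univ.filter (fun i : Fin l => r' k ≤ (i : ℕ)),
              (svalsDesc (flatten A k) i) ^ 2 := by
      intro k
      rw [tdot_eq_mdot k, flatten_sub, flatten_modeMul]
      have : flatten A k - P k * flatten A k = (1 - P k) * flatten A k := by
        rw [Matrix.sub_mul, Matrix.one_mul]
      rw [this, herr k]
    calc (L.map (fun k =>
            tdot (A - modeMul (P k) k A) (A - modeMul (P k) k A))).sum
        = ∑ k : Fin K, tdot (A - modeMul (P k) k A) (A - modeMul (P k) k A) :=
          (Fin.sum_univ_def _).symm
      _ = ∑ k : Fin K, ∑ i ∈ Finset.univ.filter (fun i : Fin l => r' k ≤ (i : ℕ)),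
            (svalsDesc (flatten A k) i) ^ 2 :=
          Finset.sum_congr rfl fun k _ => h2 k
end

section
/- Lower bound on CNN approximation error: let H be a causal, time-homogeneous continuous linear functional family on ℓ²(ℤ, ℝ^d) with representation ρ^H, and let Ĥ be any linear CNN functional whose representation ρ^Ĥ is supported on {0,...,l^K − 1}. Then sup_t ‖H_t − Ĥ_t‖ ≥ (1/√d) · sup_{t ≥ l^K} |ρ^H(t)|. -/
set_option maxHeartbeats 1000000 in
theorem stmt12 (d l K : ℕ) (hd : 1 ≤ d) (hl : 2 ≤ l)
    (H Hhat : ℤ → (lp (fun _ : ℤ => EuclideanSpace ℝ (Fin d)) 2 →L[ℝ] ℝ))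
    (ρH ρhat : ℕ → EuclideanSpace ℝ (Fin d))
    (hρH : Memℓp ρH 2)
    (hrepH : ∀ (t : ℤ) x, H t x = ∑' s : ℕ, (inner ℝ (ρH s) (x (t - (s : ℤ))) : ℝ))
    (hrepHhat : ∀ (t : ℤ) x, Hhat t x = ∑' s : ℕ, (inner ℝ (ρhat s) (x (t - (s : ℤ))) : ℝ))
    (hsupp : ∀ s : ℕ, l ^ K ≤ s → ρhat s = 0) :
    (1 / Real.sqrt d) * (⨆ t : {s : ℕ // l ^ K ≤ s}, ‖ρH (t : ℕ)‖) ≤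
      ⨆ t : ℤ, ‖H t - Hhat t‖ := by
  classical
  have _hE : True := trivial
  -- ρhat is in ℓ² since it has finite support
  have hρhat : Memℓp ρhat 2 := by
    refine (memℓp_zero ?_).of_exponent_ge (by norm_num)
    apply Set.Finite.subset (Set.finite_Iio (l ^ K))
    intro s hs
    simp only [Set.mem_setOf_eq] at hs
    by_contra h
    exact hs (hsupp s (le_of_not_gt (by simpa using h)))
  have hr : Memℓp (fun s => ρH s - ρhat s) 2 := hρH.sub hρhat
  set R : lp (fun _ : ℕ => EuclideanSpace ℝ (Fin d)) 2 := ⟨fun s => ρH s - ρhat s, hr⟩ with hR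
  -- evaluation of the difference on a "single" element
  have heval : ∀ (t : ℤ) (s₀ : ℕ) (v : EuclideanSpace ℝ (Fin d)),
      (H t - Hhat t) (lp.single 2 (t - (s₀ : ℤ)) v) =
        (inner ℝ (ρH s₀ - ρhat s₀) v : ℝ) := by
    intro t s₀ v
    have key : ∀ (ρ : ℕ → EuclideanSpace ℝ (Fin d)),
        (∑' s : ℕ, (inner ℝ (ρ s) ((lp.single 2 (t - (s₀ : ℤ)) v : lp (fun _ : ℤ => EuclideanSpace ℝ (Fin d)) 2) (t - (s : ℤ))) : ℝ))
          = (inner ℝ (ρ s₀) v : ℝ) := by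
      intro ρ
      rw [tsum_eq_single s₀]
      · rw [lp.single_apply_self]
      · intro s hs
        have hne : t - (s : ℤ) ≠ t - (s₀ : ℤ) :=
          fun hc => hs (by exact_mod_cast sub_right_inj.mp hc)
        rw [lp.single_apply_ne _ _ _ hne, inner_zero_right]
    simp only [ContinuousLinearMap.sub_apply, hrepH, hrepHhat, key, inner_sub_left]
  -- the pointwise lower bound
  have hlow : ∀ (s₀ : ℕ), l ^ K ≤ s₀ → ‖ρH s₀‖ ≤ ‖H 0 - Hhat 0‖ := by
    intro s₀ hs₀
    rcases eq_or_ne (ρH s₀) 0 with h0 | h0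
    · simp [h0]
    have h := heval 0 s₀ (ρH s₀)
    rw [hsupp s₀ hs₀, sub_zero, real_inner_self_eq_norm_sq] at h
    set x₀ : lp (fun _ : ℤ => EuclideanSpace ℝ (Fin d)) 2 :=
      lp.single 2 ((0:ℤ) - (s₀ : ℤ)) (ρH s₀) with hx₀
    have hnx₀ : ‖x₀‖ = ‖ρH s₀‖ :=
      lp.norm_single (E := fun _ : ℤ => EuclideanSpace ℝ (Fin d)) (by norm_num : (0 : ENNReal) < 2)
        ((0:ℤ) - (s₀ : ℤ)) (ρH s₀)
    have hb : ‖ρH s₀‖ ^ 2 ≤ ‖H 0 - Hhat 0‖ * ‖ρH s₀‖ := by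
      calc ‖ρH s₀‖ ^ 2 = ‖(H 0 - Hhat 0) x₀‖ := by
            rw [hx₀, h]; exact (abs_of_nonneg (sq_nonneg _)).symm
        _ ≤ ‖H 0 - Hhat 0‖ * ‖x₀‖ := (H 0 - Hhat 0).le_opNorm _
        _ = ‖H 0 - Hhat 0‖ * ‖ρH s₀‖ := by rw [hnx₀]
    have hpos : 0 < ‖ρH s₀‖ := norm_pos_iff.mpr h0
    nlinarith [sq_nonneg (‖ρH s₀‖ - ‖H 0 - Hhat 0‖)]
  -- uniform bound on the operator norms
  have hub : ∀ t : ℤ, ‖H t - Hhat t‖ ≤ ‖R‖ := by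
    intro t
    apply ContinuousLinearMap.opNorm_le_bound _ (norm_nonneg R)
    intro x
    have hinj : Function.Injective (fun s : ℕ => t - (s : ℤ)) := by
      intro a b hab
      simpa [sub_right_inj, Int.natCast_inj] using hab
    have hyMem : Memℓp (fun s : ℕ => x (t - (s : ℤ))) 2 := by
      apply memℓp_gen
      have hx := (lp.memℓp x).summable (by norm_num : (0:ℝ) < (2 : ENNReal).toReal)
      exact (hx.comp_injective hinj)
    set Y : lp (fun _ : ℕ => EuclideanSpace ℝ (Fin d)) 2 := ⟨fun s => x (t - (s : ℤ)), hyMem⟩ with hY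
    have hval : (H t - Hhat t) x = (inner ℝ R Y : ℝ) := by
      rw [lp.inner_eq_tsum]
      simp only [ContinuousLinearMap.sub_apply, hrepH, hrepHhat]
      rw [← Summable.tsum_sub]
      · congr 1
        funext s
        exact (inner_sub_left _ _ _).symm
      · exact ((lp.summable_inner (𝕜 := ℝ) ⟨ρH, hρH⟩ Y)).congr (fun s => rfl)
      · exact ((lp.summable_inner (𝕜 := ℝ) ⟨ρhat, hρhat⟩ Y)).congr (fun s => rfl)
    have hYx : ‖Y‖ ≤ ‖x‖ := by
      have h2 : (0:ℝ) < (2 : ENNReal).toReal := by norm_num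
      rw [lp.norm_eq_tsum_rpow h2, lp.norm_eq_tsum_rpow h2]
      apply Real.rpow_le_rpow
      · apply tsum_nonneg; intro s; positivity
      · apply Summable.tsum_le_tsum_of_inj _ hinj
        · intro c _; positivity
        · intro s; rfl
        · exact (lp.memℓp Y).summable h2
        · exact (lp.memℓp x).summable h2
      · norm_num
    calc ‖(H t - Hhat t) x‖ = ‖(inner ℝ R Y : ℝ)‖ := by rw [hval]
      _ ≤ ‖R‖ * ‖Y‖ := norm_inner_le_norm _ _
      _ ≤ ‖R‖ * ‖x‖ := by
          exact mul_le_mul_of_nonneg_left hYx (norm_nonneg R)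
  -- put things together
  have hSle : (⨆ t : {s : ℕ // l ^ K ≤ s}, ‖ρH (t : ℕ)‖) ≤ ‖H 0 - Hhat 0‖ := by
    have : Nonempty {s : ℕ // l ^ K ≤ s} := ⟨⟨l ^ K, le_refl _⟩⟩
    exact ciSup_le fun ⟨s, hs⟩ => hlow s hs
  have hSnn : 0 ≤ (⨆ t : {s : ℕ // l ^ K ≤ s}, ‖ρH (t : ℕ)‖) :=
    Real.iSup_nonneg fun _ => norm_nonneg _
  have hRHS : ‖H 0 - Hhat 0‖ ≤ ⨆ t : ℤ, ‖H t - Hhat t‖ :=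
    le_ciSup (f := fun t : ℤ => ‖H t - Hhat t‖) ⟨‖R‖, by rintro _ ⟨t, rfl⟩; exact hub t⟩ (0 : ℤ)
  have hd1 : (1 : ℝ) ≤ Real.sqrt d := by
    rw [show (1:ℝ) = Real.sqrt 1 by simp]
    exact Real.sqrt_le_sqrt (by exact_mod_cast hd)
  have hfrac : (1 : ℝ) / Real.sqrt d ≤ 1 := by
    rw [div_le_one (lt_of_lt_of_le one_pos hd1)]
    exact hd1
  calc (1 / Real.sqrt d) * (⨆ t : {s : ℕ // l ^ K ≤ s}, ‖ρH (t : ℕ)‖)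
      ≤ 1 * (⨆ t : {s : ℕ // l ^ K ≤ s}, ‖ρH (t : ℕ)‖) :=
        mul_le_mul_of_nonneg_right hfrac hSnn
    _ = (⨆ t : {s : ℕ // l ^ K ≤ s}, ‖ρH (t : ℕ)‖) := one_mul _
    _ ≤ ‖H 0 - Hhat 0‖ := hSle
    _ ≤ ⨆ t : ℤ, ‖H t - Hhat t‖ := hRHS
end

section
/- Upper bound on CNN approximation error via truncation and tensor approximation: with H, Ĥ as before (d input dimensions, ρ^Ĥ supported on {0,...,l^K−1}), sup_t ‖H_t − Ĥ_t‖ ≤ Σ_{i=1}^d ‖T_{l^K}(ρ^Ĥ_i) − T_{l^K}(ρ^H_i)‖ + (Σ_{s=l^K}^∞ |ρ^H(s)|²)^{1/2}, where ρ_i denotes the i-th coordinate sequence of ρ. -/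
set_option maxHeartbeats 1000000

lemma aux_sqrt_add_le (a b : ℝ) (ha : 0 ≤ a) (hb : 0 ≤ b) :
    Real.sqrt (a + b) ≤ Real.sqrt a + Real.sqrt b := by
  have h1 := Real.sq_sqrt ha
  have h2 := Real.sq_sqrt hb
  have h3 := Real.sqrt_nonneg a
  have h4 := Real.sqrt_nonneg b
  calc Real.sqrt (a + b) ≤ Real.sqrt ((Real.sqrt a + Real.sqrt b) ^ 2) :=
        Real.sqrt_le_sqrt (by nlinarith)
    _ = Real.sqrt a + Real.sqrt b := Real.sqrt_sq (by positivity)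

lemma aux_sqrt_sum_le {ι : Type*} [DecidableEq ι] (s : Finset ι) (f : ι → ℝ)
    (hf : ∀ i ∈ s, 0 ≤ f i) :
    Real.sqrt (∑ i ∈ s, f i) ≤ ∑ i ∈ s, Real.sqrt (f i) := by
  induction s using Finset.induction with
  | empty => simp
  | insert a s hx ih =>
    rw [Finset.sum_insert hx, Finset.sum_insert hx]
    calc Real.sqrt (f a + ∑ i ∈ s, f i) ≤ Real.sqrt (f a) + Real.sqrt (∑ i ∈ s, f i) :=
          aux_sqrt_add_le _ _ (hf a (by simp)) (Finset.sum_nonneg fun i hi => hf i (by simp [hi]))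
      _ ≤ _ := by gcongr; exact ih fun i hi => hf i (by simp [hi])

lemma aux_eucl_norm_sq (d : ℕ) (y : EuclideanSpace ℝ (Fin d)) : ‖y‖ ^ 2 = ∑ i, (y i) ^ 2 := by
  rw [EuclideanSpace.norm_eq, Real.sq_sqrt (by positivity)]
  simp [sq_abs]

/-- Tensorisation of an ℕ-indexed scalar sequence restricted to `[0, l^K − 1]`
into an order-`K` tensor indexed by base-`l` digits. -/
noncomputable def tensN (l K : ℕ) (ρ : ℕ → ℝ) : (Fin K → Fin l) → ℝ :=
  fun idx => ρ (∑ i : Fin K, (idx i : ℕ) * l ^ (i : ℕ))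

lemma aux_tens_sum (l K : ℕ) (g h : ℕ → ℝ) :
    ∑ idx : Fin K → Fin l, (tensN l K g idx - tensN l K h idx) ^ 2
      = ∑ s ∈ Finset.range (l ^ K), (g s - h s) ^ 2 := by
  rw [← Fin.sum_univ_eq_sum_range (fun s => (g s - h s) ^ 2) (l ^ K)]
  rw [← Equiv.sum_comp (finFunctionFinEquiv (m := l) (n := K))
    (fun j : Fin (l ^ K) => (g (j:ℕ) - h (j:ℕ)) ^ 2)]
  refine Finset.sum_congr rfl fun idx _ => ?_
  simp [tensN, finFunctionFinEquiv_apply]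


theorem stmt13 (d l K : ℕ) (hd : 1 ≤ d) (hl : 2 ≤ l)
    (H Hhat : ℤ → (lp (fun _ : ℤ => EuclideanSpace ℝ (Fin d)) 2 →L[ℝ] ℝ))
    (ρH ρhat : ℕ → EuclideanSpace ℝ (Fin d))
    (hρH : Memℓp ρH 2)
    (hrepH : ∀ (t : ℤ) x, H t x = ∑' s : ℕ, (inner ℝ (ρH s) (x (t - (s : ℤ))) : ℝ))
    (hrepHhat : ∀ (t : ℤ) x, Hhat t x = ∑' s : ℕ, (inner ℝ (ρhat s) (x (t - (s : ℤ))) : ℝ))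
    (hsupp : ∀ s : ℕ, l ^ K ≤ s → ρhat s = 0) :
    (⨆ t : ℤ, ‖H t - Hhat t‖) ≤
      (∑ i : Fin d, Real.sqrt (∑ idx : Fin K → Fin l,
        (tensN l K (fun s => ρhat s i) idx - tensN l K (fun s => ρH s i) idx) ^ 2)) +
      Real.sqrt (∑' s : {s : ℕ // l ^ K ≤ s}, ‖ρH (s : ℕ)‖ ^ 2) := by
  set N := l ^ K with hN
  have htwo : (0:ℝ) < (2:ENNReal).toReal := by norm_num
  have h2n : ((2:ENNReal).toReal) = ((2:ℕ):ℝ) := by norm_num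
  -- convert a Memℓp to summability of squares
  have hsq : ∀ {g : ℕ → EuclideanSpace ℝ (Fin d)}, Memℓp g 2 →
      Summable (fun s : ℕ => ‖g s‖ ^ 2) := by
    intro g hg
    have h := hg.summable htwo
    rw [h2n] at h
    simpa [Real.rpow_natCast] using h
  have hρhat : Memℓp ρhat 2 := by
    apply memℓp_gen
    apply summable_of_ne_finset_zero (s := Finset.range N)
    intro s hs
    rw [hsupp s (by simpa [Nat.not_lt] using (Finset.mem_range.not.mp hs))]
    simp
  have hδ : Memℓp (fun s => ρH s - ρhat s) 2 := hρH.sub hρhat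
  have hδsq : Summable (fun s : ℕ => ‖ρH s - ρhat s‖ ^ 2) := hsq hδ
  have hρHsq : Summable (fun s : ℕ => ‖ρH s‖ ^ 2) := hsq hρH
  have hρhatsq : Summable (fun s : ℕ => ‖ρhat s‖ ^ 2) := hsq hρhat
  set D := Real.sqrt (∑' s : ℕ, ‖ρH s - ρhat s‖ ^ 2) with hD
  -- Step 1: operator norm bound for every t
  have hbound : ∀ t : ℤ, ‖H t - Hhat t‖ ≤ D := by
    intro t
    refine ContinuousLinearMap.opNorm_le_bound _ (Real.sqrt_nonneg _) (fun x => ?_)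
    have hinj : Function.Injective (fun s : ℕ => t - (s:ℤ)) := by
      intro a b hab
      simpa using sub_right_injective hab
    have hx : Summable (fun u : ℤ => ‖x u‖ ^ 2) := by
      have h := (lp.memℓp x).summable htwo
      rw [h2n] at h
      simpa [Real.rpow_natCast] using h
    have hxsq : Summable (fun s : ℕ => ‖x (t - (s:ℤ))‖ ^ 2) := hx.comp_injective hinj
    have hprod : ∀ g : ℕ → EuclideanSpace ℝ (Fin d), Summable (fun s : ℕ => ‖g s‖ ^ 2) →
        Summable (fun s : ℕ => ‖g s‖ * ‖x (t - (s:ℤ))‖) := by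
      intro g hg
      refine Summable.of_nonneg_of_le (fun s => by positivity) (fun s => ?_)
        ((hg.add hxsq).div_const 2)
      have := sq_nonneg (‖g s‖ - ‖x (t - (s:ℤ))‖)
      nlinarith
    have h1 : Summable (fun s : ℕ => (inner ℝ (ρH s) (x (t - (s:ℤ))) : ℝ)) :=
      Summable.of_norm_bounded (hprod ρH hρHsq) (fun s => norm_inner_le_norm _ _)
    have h2 : Summable (fun s : ℕ => (inner ℝ (ρhat s) (x (t - (s:ℤ))) : ℝ)) :=
      Summable.of_norm_bounded (hprod ρhat hρhatsq) (fun s => norm_inner_le_norm _ _)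
    have key : ∑' s : ℕ, ‖ρH s - ρhat s‖ * ‖x (t - (s:ℤ))‖ ≤ D * ‖x‖ := by
      have haux : ∀ g : ℕ → ℝ, Summable (fun s => g s ^ 2) →
          Summable (fun s : ℕ => ‖g s‖ ^ (2:ENNReal).toReal) := by
        intro g hg
        rw [h2n]
        simp only [Real.rpow_natCast, sq_abs, Real.norm_eq_abs]
        exact hg
      set a : lp (fun _ : ℕ => ℝ) 2 := ⟨fun s => ‖ρH s - ρhat s‖, memℓp_gen (haux _ hδsq)⟩
        with ha
      set b : lp (fun _ : ℕ => ℝ) 2 := ⟨fun s => ‖x (t - (s:ℤ))‖, memℓp_gen (haux _ hxsq)⟩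
        with hb
      have hab : ∑' s : ℕ, ‖ρH s - ρhat s‖ * ‖x (t - (s:ℤ))‖ = (inner ℝ a b : ℝ) := by
        rw [lp.inner_eq_tsum]
        exact tsum_congr fun s => by simp [ha, hb, mul_comm]
      have hna : ‖a‖ = D := by
        have h := real_inner_self_eq_norm_sq a
        rw [lp.inner_eq_tsum] at h
        have h1' : (∑' s : ℕ, ‖ρH s - ρhat s‖ ^ 2) = ‖a‖ ^ 2 := by
          rw [← h]
          exact tsum_congr fun s => by simp [ha, real_inner_comm, sq]
        rw [hD, h1', Real.sqrt_sq (norm_nonneg a)]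
      have hnb : ‖b‖ ≤ ‖x‖ := by
        have h := real_inner_self_eq_norm_sq b
        rw [lp.inner_eq_tsum] at h
        have h1' : (∑' s : ℕ, ‖x (t - (s:ℤ))‖ ^ 2) = ‖b‖ ^ 2 := by
          rw [← h]
          exact tsum_congr fun s => by simp [hb, sq]
        have hxnorm : ‖x‖ ^ 2 = ∑' u : ℤ, ‖x u‖ ^ 2 := by
          have h' := lp.norm_rpow_eq_tsum htwo x
          rw [h2n] at h'
          simpa [Real.rpow_natCast] using h'
        have hle : ‖b‖ ^ 2 ≤ ‖x‖ ^ 2 := by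
          rw [← h1', hxnorm]
          exact hxsq.tsum_le_tsum_of_inj (fun s : ℕ => t - (s:ℤ)) hinj
            (fun c _ => by positivity) (fun s => le_rfl) hx
        nlinarith [norm_nonneg b, norm_nonneg x]
      calc ∑' s : ℕ, ‖ρH s - ρhat s‖ * ‖x (t - (s:ℤ))‖ = (inner ℝ a b : ℝ) := hab
        _ ≤ |(inner ℝ a b : ℝ)| := le_abs_self _
        _ ≤ ‖a‖ * ‖b‖ := abs_real_inner_le_norm a b
        _ ≤ D * ‖x‖ := by rw [hna]; gcongr
    calc ‖(H t - Hhat t) x‖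
        = ‖∑' s : ℕ, (inner ℝ (ρH s - ρhat s) (x (t - (s:ℤ))) : ℝ)‖ := by
          rw [ContinuousLinearMap.sub_apply, hrepH, hrepHhat, ← Summable.tsum_sub h1 h2]
          exact congrArg _ (tsum_congr fun s => (inner_sub_left _ _ _).symm)
      _ ≤ ∑' s : ℕ, ‖ρH s - ρhat s‖ * ‖x (t - (s:ℤ))‖ :=
          tsum_of_norm_bounded (hprod _ hδsq).hasSum (fun s => norm_inner_le_norm _ _)
      _ ≤ D * ‖x‖ := key
  -- Step 2: bound D by the RHS
  have hsplit : (∑' s : ℕ, ‖ρH s - ρhat s‖ ^ 2)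
      = (∑ s ∈ Finset.range N, ‖ρH s - ρhat s‖ ^ 2)
        + ∑' s : {s : ℕ // N ≤ s}, ‖ρH (s:ℕ) - ρhat (s:ℕ)‖ ^ 2 := by
    rw [← Summable.sum_add_tsum_subtype_compl hδsq (Finset.range N)]
    congr 1
    exact (Equiv.tsum_eq (Equiv.subtypeEquivRight (fun s => by simp [Nat.not_lt])) _).symm
  have htail : (∑' s : {s : ℕ // N ≤ s}, ‖ρH (s:ℕ) - ρhat (s:ℕ)‖ ^ 2)
      = ∑' s : {s : ℕ // N ≤ s}, ‖ρH (s:ℕ)‖ ^ 2 :=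
    tsum_congr fun s => by rw [hsupp _ s.2, sub_zero]
  have hhead : Real.sqrt (∑ s ∈ Finset.range N, ‖ρH s - ρhat s‖ ^ 2)
      ≤ ∑ i : Fin d, Real.sqrt (∑ idx : Fin K → Fin l,
        (tensN l K (fun s => ρhat s i) idx - tensN l K (fun s => ρH s i) idx) ^ 2) := by
    have hcomm : (∑ s ∈ Finset.range N, ‖ρH s - ρhat s‖ ^ 2)
        = ∑ i : Fin d, ∑ s ∈ Finset.range N, ((ρH s - ρhat s) i) ^ 2 := by
      rw [Finset.sum_comm]
      exact Finset.sum_congr rfl fun s _ => aux_eucl_norm_sq d _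
    rw [hcomm]
    refine le_trans (aux_sqrt_sum_le _ _ (fun i _ => by positivity)) ?_
    refine Finset.sum_le_sum fun i _ => ?_
    rw [aux_tens_sum l K (fun s => ρhat s i) (fun s => ρH s i)]
    apply le_of_eq
    congr 1
    refine Finset.sum_congr rfl fun s _ => ?_
    have : (ρH s - ρhat s) i = ρH s i - ρhat s i := rfl
    rw [this]
    ring
  have hDle : D ≤ (∑ i : Fin d, Real.sqrt (∑ idx : Fin K → Fin l,
        (tensN l K (fun s => ρhat s i) idx - tensN l K (fun s => ρH s i) idx) ^ 2)) +
      Real.sqrt (∑' s : {s : ℕ // l ^ K ≤ s}, ‖ρH (s : ℕ)‖ ^ 2) := by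
    rw [hD, hsplit, htail]
    refine le_trans (aux_sqrt_add_le _ _ (Finset.sum_nonneg fun s _ => by positivity)
      (tsum_nonneg fun s => by positivity)) ?_
    gcongr
  exact ciSup_le fun t => le_trans (hbound t) hDle
end

section
/- CNN depth lower bound for exponentially decaying memory: let d = 1 and ρ^H(t) = γ^t with 0 < γ < 1, and suppose a linear CNN Ĥ with representation supported on {0,...,l^K − 1} satisfies sup_t‖H_t − Ĥ_t‖ < ε with 0 < ε < 1. Then l^K ≥ log(ε)/log(γ); in particular, as γ → 1⁻ the required receptive field l^K (and hence, for fixed l, the number of layers K) diverges to infinity. -/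
/-- CNN depth lower bound for exponentially decaying memory: approximating
`H_t(x) = Σ_{s≥0} γ^s x(t−s)` within `ε` by a CNN whose representation is
supported on `[0, l^K − 1]` forces `l^K ≥ log ε / log γ`. -/
theorem stmt16 (l K : ℕ) (hl : 2 ≤ l) (γ ε : ℝ) (hγ : 0 < γ) (hγ1 : γ < 1)
    (hε : 0 < ε) (hε1 : ε < 1)
    (H Hhat : ℤ → (lp (fun _ : ℤ => ℝ) 2 →L[ℝ] ℝ))
    (hrepH : ∀ (t : ℤ) x, H t x = ∑' s : ℕ, γ ^ s * x (t - (s : ℤ)))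
    (ρhat : ℕ → ℝ)
    (hrepHhat : ∀ (t : ℤ) x, Hhat t x = ∑' s : ℕ, ρhat s * x (t - (s : ℤ)))
    (hsupp : ∀ s : ℕ, l ^ K ≤ s → ρhat s = 0)
    (herr : (⨆ t : ℤ, ‖H t - Hhat t‖) < ε) :
    Real.log ε / Real.log γ ≤ (l : ℝ) ^ K := by
  have hp2 : (0:ℝ) < (2 : ENNReal).toReal := by norm_num
  -- the shift of an ℓ² sequence
  have memshift : ∀ (x : lp (fun _ : ℤ => ℝ) 2) (t : ℤ),
      Memℓp (fun n : ℤ => x (n + t)) 2 := by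
    intro x t
    apply memℓp_gen
    have h := (lp.memℓp x).summable hp2
    exact ((Equiv.addRight t).summable_iff
      (f := fun i : ℤ => ‖x i‖ ^ (2 : ENNReal).toReal)).2 h
  set shift : lp (fun _ : ℤ => ℝ) 2 → ℤ → lp (fun _ : ℤ => ℝ) 2 :=
    fun x t => ⟨fun n => x (n + t), memshift x t⟩ with hshift
  have shift_apply : ∀ x t (n : ℤ), (shift x t : ℤ → ℝ) n = x (n + t) := fun _ _ _ => rfl
  have shift_norm : ∀ x t, ‖shift x t‖ = ‖x‖ := by
    intro x t
    have h1 := lp.norm_rpow_eq_tsum hp2 (shift x t)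
    have h2 := lp.norm_rpow_eq_tsum hp2 x
    have h3 : ∑' n : ℤ, ‖(shift x t : ℤ → ℝ) n‖ ^ (2 : ENNReal).toReal
        = ∑' n : ℤ, ‖x n‖ ^ (2 : ENNReal).toReal := by
      simpa [shift_apply] using
        (Equiv.addRight t).tsum_eq (fun i : ℤ => ‖x i‖ ^ (2 : ENNReal).toReal)
    have := h1.trans (h3.trans h2.symm)
    exact Real.rpow_left_injOn (by norm_num) (norm_nonneg _) (norm_nonneg _) this
  -- the operators are shift-conjugate, hence all norms equal the norm at time 0
  have key : ∀ t x, (H t - Hhat t) x = (H 0 - Hhat 0) (shift x t) := by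
    intro t x
    have e1 : ∀ s : ℕ, (0:ℤ) - (s:ℤ) + t = t - (s:ℤ) := fun s => by ring
    simp only [ContinuousLinearMap.sub_apply, hrepH, hrepHhat, shift_apply, e1]
  have hbound : ∀ t, ‖H t - Hhat t‖ ≤ ‖H 0 - Hhat 0‖ := by
    intro t
    apply ContinuousLinearMap.opNorm_le_bound _ (norm_nonneg _)
    intro x
    rw [key t x]
    calc ‖(H 0 - Hhat 0) (shift x t)‖ ≤ ‖H 0 - Hhat 0‖ * ‖shift x t‖ :=
          (H 0 - Hhat 0).le_opNorm _
      _ = ‖H 0 - Hhat 0‖ * ‖x‖ := by rw [shift_norm]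
  -- the norm at time 0 is below ε
  have hc : ‖H 0 - Hhat 0‖ < ε := by
    have hb : BddAbove (Set.range fun t : ℤ => ‖H t - Hhat t‖) :=
      ⟨‖H 0 - Hhat 0‖, by rintro _ ⟨t, rfl⟩; exact hbound t⟩
    exact lt_of_le_of_lt (le_ciSup hb 0) herr
  -- evaluate at the single sequence concentrated at -l^K
  set x0 : lp (fun _ : ℤ => ℝ) 2 := lp.single 2 (-(l ^ K : ℕ) : ℤ) (1:ℝ) with hx0
  have hx0norm : ‖x0‖ = 1 := by
    have := lp.norm_single (E := fun _ : ℤ => ℝ) (p := 2) (by norm_num) (-(l ^ K : ℕ) : ℤ) (1:ℝ)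
    rw [hx0]
    simpa only [norm_one] using this
  have hx0apply : ∀ j : ℤ, (x0 : ℤ → ℝ) j = if j = (-(l ^ K : ℕ) : ℤ) then 1 else 0 := by
    intro j
    rw [hx0, lp.single_apply]
    by_cases h : j = (-(l ^ K : ℕ) : ℤ) <;> simp [h, Pi.single_apply]
  have hval : (H 0 - Hhat 0) x0 = γ ^ (l ^ K) := by
    rw [ContinuousLinearMap.sub_apply, hrepH, hrepHhat]
    have hco : ∀ s : ℕ, (x0 : ℤ → ℝ) ((0:ℤ) - (s:ℤ)) = if s = l ^ K then 1 else 0 := by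
      intro s
      rw [hx0apply]
      have : ((0:ℤ) - (s:ℤ) = (-(l ^ K : ℕ) : ℤ)) ↔ s = l ^ K := by omega
      simp only [this]
    have h1 : (∑' s : ℕ, γ ^ s * (x0 : ℤ → ℝ) ((0:ℤ) - (s:ℤ))) = γ ^ (l ^ K) := by
      rw [tsum_eq_single (l ^ K) (by intro s hs; rw [hco s, if_neg hs]; ring)]
      rw [hco, if_pos rfl]; ring
    have h2 : (∑' s : ℕ, ρhat s * (x0 : ℤ → ℝ) ((0:ℤ) - (s:ℤ))) = 0 := by
      rw [tsum_eq_single (l ^ K) (by intro s hs; rw [hco s, if_neg hs]; ring)]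
      rw [hco, if_pos rfl, hsupp _ le_rfl]; ring
    rw [h1, h2, sub_zero]
  have hlow : γ ^ (l ^ K) ≤ ‖H 0 - Hhat 0‖ := by
    have := (H 0 - Hhat 0).le_opNorm x0
    rw [hval, hx0norm, mul_one, Real.norm_eq_abs,
      abs_of_pos (pow_pos hγ _)] at this
    exact this
  have hlt : γ ^ (l ^ K) < ε := lt_of_le_of_lt hlow hc
  have hloglt : (l:ℝ) ^ K * Real.log γ < Real.log ε := by
    have := Real.log_lt_log (pow_pos hγ _) hlt
    rw [Real.log_pow] at this
    push_cast at this ⊢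
    linarith
  have hlogγ : Real.log γ < 0 := Real.log_neg hγ hγ1
  rw [div_le_iff_of_neg hlogγ]
  linarith
end

section
/- Sparsity-based filter count: if ρ is a finitely supported sequence with r(ρ) ≤ l^K − 1 and exactly N nonzero entries (‖ρ‖₀ = N), then ρ can be written as a sum of N iterated dilated convolutions of single-entry filters; i.e., K·N filters of size l suffice for exact representation by a depth-K dilated CNN. -/
open scoped Classical in
lemma iterConv_single (l : ℕ) (a : ℕ → ℝ) (s : ℕ → ℤ) :
    ∀ m t, iterConv l (fun k x => if x = s k then a k else 0) m t =
      if t = ∑ k ∈ Finset.range (m + 1), (l : ℤ) ^ k * s k then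
        ∏ k ∈ Finset.range (m + 1), a k else 0 := by
  intro m
  induction m with
  | zero => intro t; simp [iterConv]
  | succ m ih =>
    intro t
    have h0 : iterConv l (fun k x => if x = s k then a k else 0) (m + 1) t =
        ∑' x : ℤ, (if x = s (m + 1) then a (m + 1) else 0) *
          iterConv l (fun k x => if x = s k then a k else 0) m (t - (l : ℤ) ^ (m + 1) * x) :=
      rfl
    rw [h0, tsum_eq_single (s (m + 1)) (by intro b hb; simp [hb])]
    simp only [if_pos rfl, ih]
    rw [Finset.sum_range_succ (fun k => (l : ℤ) ^ k * s k) (m + 1),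
      Finset.prod_range_succ a (m + 1)]
    simp only [sub_eq_iff_eq_add]
    split_ifs <;> ring
  
lemma digit_sum (l : ℕ) (hl : 0 < l) : ∀ (K n : ℕ),
    ∑ k ∈ Finset.range K, l ^ k * (n / l ^ k % l) = n % l ^ K := by
  intro K
  induction K with
  | zero => simp [Nat.mod_one]
  | succ K ih =>
    intro n
    rw [Finset.sum_range_succ, ih, Nat.mod_pow_succ]

open scoped Classical in
/-- Sparsity-based filter count: a sequence supported on `[0, l^K − 1]` with
`N` nonzero entries is a sum of `N` iterated dilated convolutions of
single-entry filters of size `l` (hence `K·N` filters suffice). -/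
theorem stmt18 (l K N : ℕ) (hl : 2 ≤ l) (hK : 1 ≤ K) (ρ : ℤ → ℝ)
    (hsupp : ∀ t : ℤ, (t < 0 ∨ (l : ℤ) ^ K ≤ t) → ρ t = 0)
    (hN : ((Finset.Icc (0 : ℤ) ((l : ℤ) ^ K - 1)).filter (fun t => ρ t ≠ 0)).card = N) :
    ∃ w : Fin N → ℕ → ℤ → ℝ,
      (∀ j : Fin N, ∀ k < K,
        (∀ s : ℤ, (s < 0 ∨ (l : ℤ) ≤ s) → w j k s = 0) ∧
        ∃ s₀ : ℤ, ∀ s : ℤ, s ≠ s₀ → w j k s = 0) ∧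
      ∀ t : ℤ, ρ t = ∑ j : Fin N, iterConv l (w j) (K - 1) t := by
  set S := (Finset.Icc (0 : ℤ) ((l : ℤ) ^ K - 1)).filter (fun t => ρ t ≠ 0) with hS
  have e : {x // x ∈ S} ≃ Fin N := S.equivFin.trans (finCongr hN)
  set τ : Fin N → ℤ := fun j => (e.symm j : ℤ) with hτ
  have hτS : ∀ j, τ j ∈ S := fun j => (e.symm j).2
  have hτ0 : ∀ j, 0 ≤ τ j := by
    intro j
    have := (Finset.mem_filter.mp (hτS j)).1
    exact (Finset.mem_Icc.mp this).1
  set dig : Fin N → ℕ → ℤ := fun j k => (((τ j).toNat / l ^ k % l : ℕ) : ℤ) with hdig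
  set a : Fin N → ℕ → ℝ := fun j k => if k = 0 then ρ (τ j) else 1 with ha
  refine ⟨fun j k x => if x = dig j k then a j k else 0, ?_, ?_⟩
  · intro j k _
    constructor
    · intro s hs
      have h1 : (0 : ℤ) ≤ dig j k := Int.ofNat_nonneg _
      have h2 : dig j k < l := by
        have h3 : (τ j).toNat / l ^ k % l < l := Nat.mod_lt _ (by omega)
        simp only [hdig]
        exact_mod_cast h3
      show (if s = dig j k then a j k else 0) = 0
      rw [if_neg (by omega)]
    · exact ⟨dig j k, fun s hs => if_neg hs⟩
  · intro t
    have key : ∀ j : Fin N, iterConv l (fun k x => if x = dig j k then a j k else 0) (K - 1) t =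
        if t = τ j then ρ (τ j) else 0 := by
      intro j
      rw [iterConv_single]
      have hK1 : K - 1 + 1 = K := by omega
      have hloc : ∑ k ∈ Finset.range (K - 1 + 1), (l : ℤ) ^ k * dig j k = τ j := by
        rw [hK1]
        have hlt : (τ j).toNat < l ^ K := by
          have h2 := (Finset.mem_Icc.mp (Finset.mem_filter.mp (hτS j)).1).2
          have h0 := hτ0 j
          rw [Int.toNat_lt' (by positivity)]
          push_cast
          linarith
        have hsum : ∑ k ∈ Finset.range K, l ^ k * ((τ j).toNat / l ^ k % l) = (τ j).toNat := by
          rw [digit_sum l (by omega) K _, Nat.mod_eq_of_lt hlt]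
        calc ∑ k ∈ Finset.range K, (l : ℤ) ^ k * dig j k
            = ((∑ k ∈ Finset.range K, l ^ k * ((τ j).toNat / l ^ k % l) : ℕ) : ℤ) := by
              push_cast [hdig]; ring_nf
          _ = τ j := by rw [hsum]; exact Int.toNat_of_nonneg (hτ0 j)
      have hprod : ∏ k ∈ Finset.range (K - 1 + 1), a j k = ρ (τ j) := by
        rw [hK1]
        simp only [ha]
        rw [Finset.prod_ite_eq' (Finset.range K) 0 (fun _ => ρ (τ j))]
        simp [Finset.mem_range, (by omega : 0 < K)]
      rw [hloc, hprod]
    simp only [key]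
    have hsum : ∑ j : Fin N, (if t = τ j then ρ (τ j) else 0) =
        ∑ x ∈ S, (if t = x then ρ x else 0) := by
      rw [← Equiv.sum_comp e (fun j => if t = τ j then ρ (τ j) else 0)]
      simp only [hτ, Equiv.symm_apply_apply]
      rw [← Finset.sum_coe_sort S (fun x => if t = x then ρ x else 0)]
    rw [hsum, Finset.sum_ite_eq]
    by_cases hts : t ∈ S
    · rw [if_pos hts]
    · rw [if_neg hts]
      by_cases hrange : t < 0 ∨ (l : ℤ) ^ K ≤ t
      · exact hsupp t hrange
      · push_neg at hrange
        by_contra hne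
        exact hts (Finset.mem_filter.mpr ⟨Finset.mem_Icc.mpr ⟨hrange.1, by omega⟩, hne⟩)
end
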